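/- arXiv:2302.01711 — 9 statements merged into one kernel-verified Lean document; each statement's English description precedes it below -/
import Mathlib

section
/- Let c > 0, let z = x + iv ∈ ℂ with v > 0, and suppose (z, m, g) satisfies system (S) with Im m ≥ 0, Im g > 0, and A₂ < ∞, B₂ < ∞. Then V₀ = |g|⁻² − c·A₂ > 0, and moreover (Im g)·V₀ = c·B₂·(Im m) + v. -/
open MeasureTheory Complex Filter Topology

noncomputable section

/-- The denominator `1 + s·g + t·m` appearing in system (S). -/
def den (m g : ℂ) (p : ℝ × ℝ) : ℂ := 1 + p.1 * g + p.2 * m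

/-- `A₁ = ∫ s/|1+s·g+t·m|² dH`. -/
def A1 (H : Measure (ℝ × ℝ)) (m g : ℂ) : ℝ :=
  ∫ p, p.1 / ‖den m g p‖ ^ 2 ∂H

/-- `A₂ = ∫ s·t/|1+s·g+t·m|² dH`. -/
def A2 (H : Measure (ℝ × ℝ)) (m g : ℂ) : ℝ :=
  ∫ p, p.1 * p.2 / ‖den m g p‖ ^ 2 ∂H

/-- `B_j = ∫ t^j/|1+s·g+t·m|² dH`. -/
def B (H : Measure (ℝ × ℝ)) (m g : ℂ) (j : ℕ) : ℝ :=
  ∫ p, p.2 ^ j / ‖den m g p‖ ^ 2 ∂H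

/-- `V₀ = |g|⁻² − c·A₂`. -/
def V0 (H : Measure (ℝ × ℝ)) (c : ℝ) (m g : ℂ) : ℝ :=
  (‖g‖ ^ 2)⁻¹ - c * A2 H m g

/-- `V = c²·A₁·B₂/V₀ + c·B₁`. -/
def V (H : Measure (ℝ × ℝ)) (c : ℝ) (m g : ℂ) : ℝ :=
  c ^ 2 * A1 H m g * B H m g 2 / V0 H c m g + c * B H m g 1

/-- `(z, m, g)` satisfies system (S): `g ≠ 0`, the denominator is a.e. nonzero, the two
integrands are integrable, and the two equations hold. -/
def SatS (H : Measure (ℝ × ℝ)) (c : ℝ) (z m g : ℂ) : Prop :=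
  g ≠ 0 ∧ (∀ᵐ p ∂H, den m g p ≠ 0) ∧
    Integrable (fun p => (den m g p)⁻¹) H ∧
    Integrable (fun p => (p.2 : ℂ) / den m g p) H ∧
    z * m + (1 - (c : ℂ)) + c * ∫ p, (den m g p)⁻¹ ∂H = 0 ∧
    z + 1 / g - c * ∫ p, (p.2 : ℂ) / den m g p ∂H = 0

/-- Integrability of the integrand of `A₁`. -/
def IntA1 (H : Measure (ℝ × ℝ)) (m g : ℂ) : Prop :=
  Integrable (fun p : ℝ × ℝ => p.1 / ‖den m g p‖ ^ 2) H

/-- Integrability of the integrand of `A₂`. -/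
def IntA2 (H : Measure (ℝ × ℝ)) (m g : ℂ) : Prop :=
  Integrable (fun p : ℝ × ℝ => p.1 * p.2 / ‖den m g p‖ ^ 2) H

/-- Integrability of the integrand of `B_j`. -/
def IntB (H : Measure (ℝ × ℝ)) (m g : ℂ) (j : ℕ) : Prop :=
  Integrable (fun p : ℝ × ℝ => p.2 ^ j / ‖den m g p‖ ^ 2) H

/-!
Taking imaginary parts in the second equation of (S), and using
`Im (1/g) = -Im g / |g|²` and `Im (t / (1 + s g + t m)) = -(s t Im g + t² Im m) / |1 + s g + t m|²`,
gives `Im g · (|g|⁻² - c A₂) = c B₂ Im m + Im z`. The right side is positive, and so is `Im g`,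
hence `V₀ > 0`.
-/

lemma im_ofReal_snd_div_den (m g : ℂ) (p : ℝ × ℝ) :
    ((p.2 : ℂ) / den m g p).im =
      -g.im * (p.1 * p.2 / ‖den m g p‖ ^ 2) - m.im * (p.2 ^ 2 / ‖den m g p‖ ^ 2) := by
  rw [div_im, Complex.sq_norm]
  simp only [den, add_im, add_re, mul_im, mul_re,
    one_im, one_re, ofReal_re, ofReal_im]
  ring

lemma B_nonneg_of_even (H : Measure (ℝ × ℝ)) (m g : ℂ) {j : ℕ} (hj : Even j) :
    0 ≤ B H m g j :=
  integral_nonneg fun _ => div_nonneg (hj.pow_nonneg _) (sq_nonneg _)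

lemma im_integral_ofReal_snd_div_den {H : Measure (ℝ × ℝ)} {m g : ℂ}
    (hint : Integrable (fun p => (p.2 : ℂ) / den m g p) H)
    (hA2 : IntA2 H m g) (hB2 : IntB H m g 2) :
    (∫ p, (p.2 : ℂ) / den m g p ∂H).im = -g.im * A2 H m g - m.im * B H m g 2 := by
  rw [← imCLM_apply, ← imCLM.integral_comp_comm hint]
  simp only [imCLM_apply, im_ofReal_snd_div_den]
  rw [integral_sub (hA2.const_mul _) (hB2.const_mul _), integral_const_mul, integral_const_mul]
  rfl

lemma im_mul_V0_eq {H : Measure (ℝ × ℝ)} {c : ℝ} {z m g : ℂ}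
    (hint : Integrable (fun p => (p.2 : ℂ) / den m g p) H)
    (heq : z + 1 / g - c * ∫ p, (p.2 : ℂ) / den m g p ∂H = 0)
    (hA2 : IntA2 H m g) (hB2 : IntB H m g 2) :
    g.im * V0 H c m g = c * B H m g 2 * m.im + z.im := by
  have him := congrArg Complex.im heq
  simp only [add_im, sub_im, mul_im, zero_im,
    ofReal_re, ofReal_im, zero_mul, add_zero, one_div, inv_im,
    im_integral_ofReal_snd_div_den hint hA2 hB2] at him
  rw [V0, Complex.sq_norm]
  linear_combination -him

theorem stmt0_general (H : Measure (ℝ × ℝ))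
    (c : ℝ) (hc : 0 < c)
    (z m g : ℂ) (hz : 0 < z.im)
    (hS : SatS H c z m g)
    (hm : 0 ≤ m.im) (hg : 0 < g.im)
    (hA2 : IntA2 H m g) (hB2 : IntB H m g 2) :
    0 < V0 H c m g ∧
      g.im * V0 H c m g = c * B H m g 2 * m.im + z.im := by
  obtain ⟨-, -, -, hint, -, heq⟩ := hS
  have hkey := im_mul_V0_eq hint heq hA2 hB2
  have hrhs : 0 < c * B H m g 2 * m.im + z.im := by
    have := B_nonneg_of_even H m g even_two
    positivity
  exact ⟨pos_of_mul_pos_right (hkey ▸ hrhs) hg.le, hkey⟩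

theorem stmt0 (H : Measure (ℝ × ℝ)) [IsProbabilityMeasure H]
    (hHsupp : ∀ᵐ p ∂H, 0 ≤ p.1 ∧ 0 ≤ p.2)
    (c : ℝ) (hc : 0 < c)
    (z m g : ℂ) (hz : 0 < z.im)
    (hS : SatS H c z m g)
    (hm : 0 ≤ m.im) (hg : 0 < g.im)
    (hA2 : IntA2 H m g) (hB2 : IntB H m g 2) :
    0 < V0 H c m g ∧
      g.im * V0 H c m g = c * B H m g 2 * m.im + z.im :=
  stmt0_general H c hc z m g hz hS hm hg hA2 hB2

end
end

section
/- Let c > 0, let z = x + iv ∈ ℂ with v > 0, and suppose (z, m, g) satisfies system (S) with Im m ≥ 0, Im g > 0, and with A₁, A₂, B₀, B₁, B₂ all finite. Then V₀ > 0 and the identity (Im m)·|z|² = V²·(Im m) + (V·c·A₁ + c²·A₁·B₁)·v/V₀ + (1 − c)·v + c·B₀·v holds. -/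
/-!
Multiplying an equation of (S) by a constant `α` and taking imaginary parts gives a real linear
relation between the integrals `A_j`, `B_j`, because
`Im (α / (1 + s g + t m)) = (Im α + s Im (α ḡ) + t Im (α m̄)) / |1 + s g + t m|²`.
With `α = 1` the second equation reads `Im g · V₀ = Im z + c Im m B₂ > 0`, so `V₀ > 0`.
The choices `α = g` and `α = m` (second equation) together with `α = 1` (first equation) give
`Im (z g) = Im g · V`, and `α = z̄` in the first equation expresses `Im m |z|²` through
`Im (z g)` and `Im (z m)`. Substituting `Im g = (Im z + c Im m B₂) / V₀` yields the identity.
-/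

open MeasureTheory Complex Filter Topology

noncomputable section

open ComplexConjugate

lemma im_mul_ofReal_div_den (α : ℂ) (w : ℝ) (m g : ℂ) (p : ℝ × ℝ) :
    (α * (w / den m g p)).im =
      w * (α.im + p.1 * (α * conj g).im + p.2 * (α * conj m).im) / ‖den m g p‖ ^ 2 := by
  rw [← mul_div_assoc, div_im, Complex.sq_norm]
  simp only [den, mul_im, mul_re, add_re, add_im, ofReal_re, ofReal_im, one_re, one_im, conj_re,
    conj_im]
  ring

lemma im_mul_integral_ofReal_div_den {H : Measure (ℝ × ℝ)} {m g : ℂ} (α : ℂ) (w : ℝ × ℝ → ℝ)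
    (hw : Integrable (fun p => (w p : ℂ) / den m g p) H)
    (h₀ : Integrable (fun p => w p / ‖den m g p‖ ^ 2) H)
    (h₁ : Integrable (fun p => p.1 * w p / ‖den m g p‖ ^ 2) H)
    (h₂ : Integrable (fun p => p.2 * w p / ‖den m g p‖ ^ 2) H) :
    (α * ∫ p, (w p : ℂ) / den m g p ∂H).im =
      α.im * ∫ p, w p / ‖den m g p‖ ^ 2 ∂H
        + (α * conj g).im * ∫ p, p.1 * w p / ‖den m g p‖ ^ 2 ∂H
        + (α * conj m).im * ∫ p, p.2 * w p / ‖den m g p‖ ^ 2 ∂H := by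
  have hpt : ∀ p : ℝ × ℝ, (α * (w p / den m g p)).im =
      α.im * (w p / ‖den m g p‖ ^ 2) + (α * conj g).im * (p.1 * w p / ‖den m g p‖ ^ 2)
        + (α * conj m).im * (p.2 * w p / ‖den m g p‖ ^ 2) := fun p => by
    rw [im_mul_ofReal_div_den]; ring
  rw [← integral_const_mul, ← RCLike.im_eq_complex_im, ← integral_im (hw.const_mul α)]
  simp only [RCLike.im_eq_complex_im, hpt]
  rw [integral_add _ (h₂.const_mul _), integral_add (h₀.const_mul _) (h₁.const_mul _),
    integral_const_mul, integral_const_mul, integral_const_mul]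
  exact (h₀.const_mul _).add (h₁.const_mul _)

lemma im_mul_integral_inv_den {H : Measure (ℝ × ℝ)} {m g : ℂ} (α : ℂ)
    (hf : Integrable (fun p => (den m g p)⁻¹) H)
    (hA1 : IntA1 H m g) (hB0 : IntB H m g 0) (hB1 : IntB H m g 1) :
    (α * ∫ p, (den m g p)⁻¹ ∂H).im =
      α.im * B H m g 0 + (α * conj g).im * A1 H m g + (α * conj m).im * B H m g 1 := by
  have h := im_mul_integral_ofReal_div_den (H := H) α (fun _ => 1) (by simpa using hf)
    (by simpa [IntB] using hB0) (by simpa [IntA1] using hA1) (by simpa [IntB] using hB1)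
  simpa [A1, B] using h

lemma im_mul_integral_snd_div_den {H : Measure (ℝ × ℝ)} {m g : ℂ} (α : ℂ)
    (hf : Integrable (fun p => (p.2 : ℂ) / den m g p) H)
    (hA2 : IntA2 H m g) (hB1 : IntB H m g 1) (hB2 : IntB H m g 2) :
    (α * ∫ p, (p.2 : ℂ) / den m g p ∂H).im =
      α.im * B H m g 1 + (α * conj g).im * A2 H m g + (α * conj m).im * B H m g 2 := by
  have h := im_mul_integral_ofReal_div_den (H := H) α (fun p => p.2) hf
    (by simpa [IntB] using hB1) hA2 (by simpa [IntB, sq] using hB2)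
  simpa [A2, B, sq] using h

namespace SatS

variable {H : Measure (ℝ × ℝ)} {c : ℝ} {z m g : ℂ}

lemma im_mul_first_equation (hS : SatS H c z m g) (hA1 : IntA1 H m g) (hB0 : IntB H m g 0)
    (hB1 : IntB H m g 1) (α : ℂ) :
    (α * (z * m)).im + (1 - c) * α.im
      + c * (α.im * B H m g 0 + (α * conj g).im * A1 H m g + (α * conj m).im * B H m g 1) = 0 := by
  obtain ⟨-, -, hf, -, h, -⟩ := hS
  have e := congrArg (fun w => (α * w).im) h
  simp only [mul_add, mul_sub, mul_one, add_im, sub_im, mul_left_comm α (c : ℂ), im_ofReal_mul,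
    im_mul_ofReal, mul_zero, zero_im, im_mul_integral_inv_den α hf hA1 hB0 hB1] at e
  linear_combination e

lemma im_mul_second_equation (hS : SatS H c z m g) (hA2 : IntA2 H m g) (hB1 : IntB H m g 1)
    (hB2 : IntB H m g 2) (α : ℂ) :
    (α * z).im + (α / g).im
      - c * (α.im * B H m g 1 + (α * conj g).im * A2 H m g + (α * conj m).im * B H m g 2) = 0 := by
  obtain ⟨-, -, -, hf, -, h⟩ := hS
  have e := congrArg (fun w => (α * w).im) h
  simp only [mul_add, mul_sub, add_im, sub_im, mul_left_comm α (c : ℂ), im_ofReal_mul, mul_zero,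
    zero_im, mul_one_div, im_mul_integral_snd_div_den α hf hA2 hB1 hB2] at e
  linear_combination e

lemma im_z_mul_m (hS : SatS H c z m g) (hA1 : IntA1 H m g) (hB0 : IntB H m g 0)
    (hB1 : IntB H m g 1) :
    (z * m).im = c * g.im * A1 H m g + c * m.im * B H m g 1 := by
  have e := hS.im_mul_first_equation hA1 hB0 hB1 1
  simp only [one_mul, one_im, conj_im] at e
  linear_combination e

lemma g_im_mul_V0 (hS : SatS H c z m g) (hA2 : IntA2 H m g) (hB1 : IntB H m g 1)
    (hB2 : IntB H m g 2) :
    g.im * V0 H c m g = z.im + c * m.im * B H m g 2 := by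
  have e := hS.im_mul_second_equation hA2 hB1 hB2 1
  simp only [one_mul, one_im, conj_im, one_div, inv_im, ← Complex.sq_norm] at e
  rw [V0]
  linear_combination -e

lemma V0_pos (hS : SatS H c z m g) (hA2 : IntA2 H m g) (hB1 : IntB H m g 1)
    (hB2 : IntB H m g 2) (hc : 0 ≤ c) (hz : 0 < z.im) (hm : 0 ≤ m.im) (hg : 0 < g.im) :
    0 < V0 H c m g := by
  have hB2_nonneg : 0 ≤ B H m g 2 := integral_nonneg fun p => by positivity
  have h : 0 < g.im * V0 H c m g := by
    rw [hS.g_im_mul_V0 hA2 hB1 hB2]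
    positivity
  exact pos_of_mul_pos_right h hg.le

lemma im_z_mul_g (hS : SatS H c z m g) (hA1 : IntA1 H m g) (hA2 : IntA2 H m g)
    (hB0 : IntB H m g 0) (hB1 : IntB H m g 1) (hB2 : IntB H m g 2) (hV0 : V0 H c m g ≠ 0) :
    (z * g).im = g.im * V H c m g := by
  have e₁ := hS.im_z_mul_m hA1 hB0 hB1
  have e₂ := hS.im_mul_second_equation hA2 hB1 hB2 g
  have e₃ := hS.im_mul_second_equation hA2 hB1 hB2 m
  rw [div_self hS.1, mul_conj, mul_comm g z] at e₂
  rw [div_eq_mul_inv, inv_def, ← mul_assoc, im_mul_ofReal, normSq_eq_norm_sq, mul_conj,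
    mul_comm m z] at e₃
  simp only [one_im, ofReal_im, zero_mul, add_zero] at e₂ e₃
  have hconj : (g * conj m).im = -(m * conj g).im := by
    simp only [mul_im, conj_re, conj_im]
    ring
  have hK : (z * g).im * V0 H c m g
      = g.im * (c ^ 2 * A1 H m g * B H m g 2 + c * B H m g 1 * V0 H c m g) := by
    unfold V0
    -- `e₃ - e₁` says `Im (m ḡ) · V₀ = -c Im g A₁`
    linear_combination ((‖g‖ ^ 2)⁻¹ - c * A2 H m g) * (e₂ + c * B H m g 2 * hconj)
      - c * B H m g 2 * (e₃ - e₁)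
  rw [V]
  field_simp
  linear_combination hK

lemma m_im_mul_sq_norm_z (hS : SatS H c z m g) (hA1 : IntA1 H m g) (hB0 : IntB H m g 0)
    (hB1 : IntB H m g 1) :
    m.im * ‖z‖ ^ 2 = (1 - c) * z.im + c * z.im * B H m g 0
      + c * (z * g).im * A1 H m g + c * (z * m).im * B H m g 1 := by
  have e := hS.im_mul_first_equation hA1 hB0 hB1 (conj z)
  rw [← mul_assoc, conj_mul', ← map_mul, ← map_mul] at e
  simp only [conj_im, ← ofReal_pow, im_ofReal_mul] at e
  linear_combination e

end SatS

theorem stmt1_general (H : Measure (ℝ × ℝ))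
    (c : ℝ) (hc : 0 < c)
    (z m g : ℂ) (hz : 0 < z.im)
    (hS : SatS H c z m g)
    (hm : 0 ≤ m.im) (hg : 0 < g.im)
    (hA1 : IntA1 H m g) (hA2 : IntA2 H m g)
    (hB0 : IntB H m g 0) (hB1 : IntB H m g 1) (hB2 : IntB H m g 2) :
    0 < V0 H c m g ∧
      m.im * ‖z‖ ^ 2 =
        V H c m g ^ 2 * m.im +
          (V H c m g * c * A1 H m g + c ^ 2 * A1 H m g * B H m g 1) * z.im / V0 H c m g +
          (1 - c) * z.im + c * B H m g 0 * z.im := by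
  have hV0 : 0 < V0 H c m g := hS.V0_pos hA2 hB1 hB2 hc.le hz hm hg
  refine ⟨hV0, ?_⟩
  have hg_im : g.im = (z.im + c * m.im * B H m g 2) / V0 H c m g :=
    eq_div_of_mul_eq hV0.ne' (hS.g_im_mul_V0 hA2 hB1 hB2)
  rw [hS.m_im_mul_sq_norm_z hA1 hB0 hB1, hS.im_z_mul_g hA1 hA2 hB0 hB1 hB2 hV0.ne',
    hS.im_z_mul_m hA1 hB0 hB1, hg_im, V]
  field_simp
  ring

theorem stmt1 (H : Measure (ℝ × ℝ)) [IsProbabilityMeasure H]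
    (hHsupp : ∀ᵐ p ∂H, 0 ≤ p.1 ∧ 0 ≤ p.2)
    (c : ℝ) (hc : 0 < c)
    (z m g : ℂ) (hz : 0 < z.im)
    (hS : SatS H c z m g)
    (hm : 0 ≤ m.im) (hg : 0 < g.im)
    (hA1 : IntA1 H m g) (hA2 : IntA2 H m g)
    (hB0 : IntB H m g 0) (hB1 : IntB H m g 1) (hB2 : IntB H m g 2) :
    0 < V0 H c m g ∧
      m.im * ‖z‖ ^ 2 =
        V H c m g ^ 2 * m.im +
          (V H c m g * c * A1 H m g + c ^ 2 * A1 H m g * B H m g 1) * z.im / V0 H c m g +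
          (1 - c) * z.im + c * B H m g 0 * z.im :=
  stmt1_general H c hc z m g hz hS hm hg hA1 hA2 hB0 hB1 hB2

end
end

section
/- Let 0 < c ≤ 1, let z = x + iv ∈ ℂ with v > 0, and suppose (z, m, g) satisfies system (S) with Im m > 0, Im g > 0, and with A₁, A₂, B₀, B₁, B₂ all finite. Then V₀ > 0 and V < |z|; in particular c·B₁ < |z|. -/
open MeasureTheory Complex Filter Topology

noncomputable section

/-!
Since `(1 + s g + t m)⁻¹ = (1 + s ḡ + t m̄) / |1 + s g + t m|²`, the two integrals of (S) are
`B₀ + ḡ A₁ + m̄ B₁` and `B₁ + ḡ A₂ + m̄ B₂`, so (S) becomes a pair of algebraic equations in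
`z, m, g` with real coefficients. The imaginary part of the second one reads
`Im g · V₀ = Im z + c · Im m · B₂ > 0`. Eliminating `m` between the first equation, the second and
its conjugate gives `z g + V ḡ = -R / V₀` with `R = |z|² + c(1-c) B₂ + c² (B₀ B₂ - B₁²)`, which is
positive by Cauchy–Schwarz. Taking the imaginary part of `z̄ (z g + V ḡ)` then yields
`(|z|² - V²) Im g = (R / V₀) Im z > 0`, i.e. `|V| < |z|`.
-/

open ComplexConjugate

lemma inv_den_eq (m g : ℂ) (p : ℝ × ℝ) :
    (den m g p)⁻¹ = ((p.2 ^ 0 / ‖den m g p‖ ^ 2 : ℝ) : ℂ)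
      + conj g * ((p.1 / ‖den m g p‖ ^ 2 : ℝ) : ℂ)
      + conj m * ((p.2 ^ 1 / ‖den m g p‖ ^ 2 : ℝ) : ℂ) := by
  rw [inv_def, ← Complex.sq_norm]
  simp only [den, map_add, map_one, map_mul, conj_ofReal]
  push_cast
  ring

lemma ofReal_div_den_eq (m g : ℂ) (p : ℝ × ℝ) :
    (p.2 : ℂ) / den m g p = ((p.2 ^ 1 / ‖den m g p‖ ^ 2 : ℝ) : ℂ)
      + conj g * ((p.1 * p.2 / ‖den m g p‖ ^ 2 : ℝ) : ℂ)
      + conj m * ((p.2 ^ 2 / ‖den m g p‖ ^ 2 : ℝ) : ℂ) := by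
  rw [div_eq_mul_inv, inv_den_eq]
  push_cast
  ring

section Moments

variable {H : Measure (ℝ × ℝ)} {m g : ℂ}

lemma integral_inv_den (hA1 : IntA1 H m g) (hB0 : IntB H m g 0) (hB1 : IntB H m g 1) :
    ∫ p, (den m g p)⁻¹ ∂H = B H m g 0 + conj g * A1 H m g + conj m * B H m g 1 := by
  have h0 : Integrable (fun p => ((p.2 ^ 0 / ‖den m g p‖ ^ 2 : ℝ) : ℂ)) H := hB0.ofReal
  have h1 : Integrable (fun p => conj g * ((p.1 / ‖den m g p‖ ^ 2 : ℝ) : ℂ)) H :=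
    hA1.ofReal.const_mul _
  have h2 : Integrable (fun p => conj m * ((p.2 ^ 1 / ‖den m g p‖ ^ 2 : ℝ) : ℂ)) H :=
    hB1.ofReal.const_mul _
  simp_rw [inv_den_eq]
  rw [integral_add (h0.fun_add h1) h2, integral_add h0 h1, integral_const_mul, integral_const_mul,
    integral_complex_ofReal, integral_complex_ofReal, integral_complex_ofReal]
  rfl

lemma integral_ofReal_div_den (hA2 : IntA2 H m g) (hB1 : IntB H m g 1) (hB2 : IntB H m g 2) :
    ∫ p, (p.2 : ℂ) / den m g p ∂H = B H m g 1 + conj g * A2 H m g + conj m * B H m g 2 := by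
  have h0 : Integrable (fun p => ((p.2 ^ 1 / ‖den m g p‖ ^ 2 : ℝ) : ℂ)) H := hB1.ofReal
  have h1 : Integrable (fun p => conj g * ((p.1 * p.2 / ‖den m g p‖ ^ 2 : ℝ) : ℂ)) H :=
    hA2.ofReal.const_mul _
  have h2 : Integrable (fun p => conj m * ((p.2 ^ 2 / ‖den m g p‖ ^ 2 : ℝ) : ℂ)) H :=
    hB2.ofReal.const_mul _
  simp_rw [ofReal_div_den_eq]
  rw [integral_add (h0.fun_add h1) h2, integral_add h0 h1, integral_const_mul, integral_const_mul,
    integral_complex_ofReal, integral_complex_ofReal, integral_complex_ofReal]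
  rfl

end Moments

lemma sq_integral_div_le {α : Type*} [MeasurableSpace α] {μ : Measure α} {f w : α → ℝ}
    (hw : ∀ x, 0 ≤ w x) (h0 : Integrable (fun x => f x ^ 0 / w x) μ)
    (h1 : Integrable (fun x => f x ^ 1 / w x) μ) (h2 : Integrable (fun x => f x ^ 2 / w x) μ) :
    (∫ x, f x ^ 1 / w x ∂μ) ^ 2 ≤ (∫ x, f x ^ 0 / w x ∂μ) * ∫ x, f x ^ 2 / w x ∂μ := by
  have hquad : ∀ t : ℝ, 0 ≤ (∫ x, f x ^ 0 / w x ∂μ) * (t * t)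
      + 2 * (∫ x, f x ^ 1 / w x ∂μ) * t + ∫ x, f x ^ 2 / w x ∂μ := by
    intro t
    have hsq : 0 ≤ ∫ x, (f x + t) ^ 2 / w x ∂μ :=
      integral_nonneg fun x => div_nonneg (sq_nonneg _) (hw x)
    have hexp : (fun x => (f x + t) ^ 2 / w x)
        = fun x => (t * t) * (f x ^ 0 / w x) + (2 * t) * (f x ^ 1 / w x) + f x ^ 2 / w x := by
      ext x; ring
    rw [hexp, integral_add ((h0.const_mul _).fun_add (h1.const_mul _)) h2,
      integral_add (h0.const_mul _) (h1.const_mul _), integral_const_mul,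
      integral_const_mul] at hsq
    linarith
  have := discrim_le_zero hquad
  rw [discrim] at this
  linarith

lemma inv_sq_norm_sub_pos {z m g : ℂ} {c a2 b1 b2 : ℝ} (hz : 0 < z.im) (hm : 0 < m.im)
    (hg : 0 < g.im) (hc : 0 ≤ c) (hb2 : 0 ≤ b2)
    (E2 : z + 1 / g - c * (b1 + conj g * a2 + conj m * b2) = 0) :
    0 < (‖g‖ ^ 2)⁻¹ - c * a2 := by
  have h := congrArg im E2
  simp only [one_div, sub_im, add_im, inv_im, ← Complex.sq_norm, mul_im, ofReal_re, ofReal_im,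
    conj_re, conj_im, mul_zero, zero_mul, add_zero, zero_im] at h
  have him : g.im * ((‖g‖ ^ 2)⁻¹ - c * a2) = z.im + c * m.im * b2 := by linear_combination -h
  exact pos_of_mul_pos_right (him ▸ by positivity) hg.le

lemma mul_add_mul_conj_eq_neg {z m g : ℂ} {c a1 a2 b0 b1 b2 w : ℝ}
    (hw : w = (‖g‖ ^ 2)⁻¹ - c * a2) (hw0 : w ≠ 0)
    (E1 : z * m + (1 - c) + c * (b0 + conj g * a1 + conj m * b1) = 0)
    (E2 : z + 1 / g - c * (b1 + conj g * a2 + conj m * b2) = 0) :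
    z * g + ((c ^ 2 * a1 * b2 / w + c * b1 : ℝ) : ℂ) * conj g
      = -(((‖z‖ ^ 2 + c * (1 - c) * b2 + c ^ 2 * (b0 * b2 - b1 ^ 2)) / w : ℝ) : ℂ) := by
  have hinv : 1 / g = conj g * ((‖g‖ ^ 2)⁻¹ : ℝ) := by rw [one_div, inv_def, Complex.sq_norm]
  rw [hinv] at E2
  have E2c := congrArg conj E2
  simp only [map_sub, map_add, map_mul, conj_conj, conj_ofReal, map_zero] at E2c
  have hwC : (w : ℂ) = ((‖g‖ ^ 2)⁻¹ - c * a2 : ℝ) := congrArg _ hw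
  have hw0C : (w : ℂ) ≠ 0 := ofReal_ne_zero.2 hw0
  push_cast at E2 E2c hwC ⊢
  field_simp
  -- in `c b₂ · E1`, the `m̄`-term `c b₁ · (c m̄ b₂)` is removed by `E2`, the `m`-term by `z · E2c`
  linear_combination (c * b2) * E1 + (c * b1) * E2 + z * E2c - mul_conj' z
    + (z * g + c * b1 * conj g) * hwC

lemma abs_lt_norm_of_mul_add_mul_conj_eq {z g : ℂ} {v ρ : ℝ} (hz : 0 < z.im) (hg : 0 < g.im)
    (hρ : 0 < ρ) (h : z * g + v * conj g = -ρ) : |v| < ‖z‖ := by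
  have hre := congrArg re h
  have him := congrArg im h
  simp only [add_re, add_im, mul_re, mul_im, ofReal_re, ofReal_im, conj_re, conj_im, neg_re,
    neg_im] at hre him
  -- the imaginary part of `z̄ (z g + v ḡ) = -ρ z̄`
  have key : (‖z‖ ^ 2 - v ^ 2) * g.im = ρ * z.im := by
    have hn : ‖z‖ ^ 2 = z.re ^ 2 + z.im ^ 2 := by rw [Complex.sq_norm, normSq_apply]; ring
    linear_combination (-z.im) * hre + (z.re + v) * him + g.im * hn
  have hpos : 0 < (‖z‖ ^ 2 - v ^ 2) * g.im := key ▸ mul_pos hρ hz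
  exact abs_lt_of_sq_lt_sq (sub_pos.1 (pos_of_mul_pos_left hpos hg.le)) (norm_nonneg z)

theorem stmt2_general (H : Measure (ℝ × ℝ))
    (hHsupp : ∀ᵐ p ∂H, 0 ≤ p.1 ∧ 0 ≤ p.2)
    (c : ℝ) (hc : 0 < c) (hc1 : c ≤ 1)
    (z m g : ℂ) (hz : 0 < z.im)
    (hS : SatS H c z m g)
    (hm : 0 < m.im) (hg : 0 < g.im)
    (hA1 : IntA1 H m g) (hA2 : IntA2 H m g)
    (hB0 : IntB H m g 0) (hB1 : IntB H m g 1) (hB2 : IntB H m g 2) :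
    0 < V0 H c m g ∧ V H c m g < ‖z‖ ∧ c * B H m g 1 < ‖z‖ := by
  obtain ⟨-, -, -, -, E1, E2⟩ := hS
  rw [integral_inv_den hA1 hB0 hB1] at E1
  rw [integral_ofReal_div_den hA2 hB1 hB2] at E2
  have hA1_nonneg : 0 ≤ A1 H m g :=
    integral_nonneg_of_ae (hHsupp.mono fun p hp => div_nonneg hp.1 (sq_nonneg _))
  have hB2_nonneg : 0 ≤ B H m g 2 := integral_nonneg fun p => by positivity
  have hV0 : 0 < V0 H c m g := inv_sq_norm_sub_pos hz hm hg hc.le hB2_nonneg E2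
  have hR : 0 < ‖z‖ ^ 2 + c * (1 - c) * B H m g 2
      + c ^ 2 * (B H m g 0 * B H m g 2 - B H m g 1 ^ 2) := by
    have hCS := sub_nonneg.2 (sq_integral_div_le (fun p => sq_nonneg _) hB0 hB1 hB2)
    have hz0 : 0 < ‖z‖ := norm_pos_iff.2 fun h0 => by simp [h0] at hz
    have hc' := sub_nonneg.2 hc1
    positivity
  have hV : |V H c m g| < ‖z‖ :=
    abs_lt_norm_of_mul_add_mul_conj_eq hz hg (div_pos hR hV0)
      (mul_add_mul_conj_eq_neg rfl hV0.ne' E1 E2)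
  have hB1_le : c * B H m g 1 ≤ V H c m g :=
    le_add_of_nonneg_left (div_nonneg (by positivity) hV0.le)
  exact ⟨hV0, (le_abs_self _).trans_lt hV, hB1_le.trans_lt ((le_abs_self _).trans_lt hV)⟩

theorem stmt2 (H : Measure (ℝ × ℝ)) [IsProbabilityMeasure H]
    (hHsupp : ∀ᵐ p ∂H, 0 ≤ p.1 ∧ 0 ≤ p.2)
    (c : ℝ) (hc : 0 < c) (hc1 : c ≤ 1)
    (z m g : ℂ) (hz : 0 < z.im)
    (hS : SatS H c z m g)
    (hm : 0 < m.im) (hg : 0 < g.im)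
    (hA1 : IntA1 H m g) (hA2 : IntA2 H m g)
    (hB0 : IntB H m g 0) (hB1 : IntB H m g 1) (hB2 : IntB H m g 2) :
    0 < V0 H c m g ∧ V H c m g < ‖z‖ ∧ c * B H m g 1 < ‖z‖ :=
  stmt2_general H hHsupp c hc hc1 z m g hz hS hm hg hA1 hA2 hB0 hB1 hB2

end
end

section
/- (Theorem, part (c).) Let c > 0 and let z_n be a sequence in the open upper half-plane converging to z ∈ ℂ with Im z ≥ 0 and z ≠ 0. Suppose for each n the triple (z_n, m_n, g_n) satisfies system (S), that m_n → m̃ and g_n → g̃ in ℂ, that |g_n| ≥ δ for all n for some δ > 0, and that the quantities A₁(n), A₂(n), B₁(n), B₂(n) computed from (m_n, g_n) are bounded by a constant M uniformly in n. Then |g̃| ≥ δ, 1 + s·g̃ + t·m̃ ≠ 0 for H-almost every (s,t), the corresponding integrals ∫ dH(s,t)/(1 + s·g̃ + t·m̃) and ∫ t dH(s,t)/(1 + s·g̃ + t·m̃) are finite, and the limiting triple (z, m̃, g̃) satisfies system (S). -/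
/-!
Fatou's lemma applied to `ψ / |1 + s gₙ + t mₙ|²` for the weights `ψ = s, t, st, t²` bounds the
same integrals for the limiting denominator `D`. As they are finite, `D` can vanish only where
`s = t = 0`, that is nowhere, and the bounds for `s, t` and for `t²` make `1/D` and `t/D` square
integrable. Finally `1/Dₙ - 1/D = (D - Dₙ)/(Dₙ D)` is at most `(|g - gₙ| s + |m - mₙ| t)/(|Dₙ||D|)`,
whose integral is bounded, by AM–GM, through the `A` and `B` integrals of `Dₙ` and `D`; so the
integrals in (S) converge and both equations pass to the limit.
-/

open MeasureTheory Complex Filter Topology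

noncomputable section

-- `IntA1 H m g ∧ A1 H m g ≤ M` is `WeightedInvSqLE H Prod.fst (den m g) M` by unfolding, and
-- likewise `A₂`, `B₂` are the weights `s t`, `t²`; `B₁` needs `t ^ 1 = t`.
def WeightedInvSqLE {α : Type*} [MeasurableSpace α] (μ : Measure α) (ψ : α → ℝ) (D : α → ℂ)
    (M : ℝ) : Prop :=
  Integrable (fun p => ψ p / ‖D p‖ ^ 2) μ ∧ ∫ p, ψ p / ‖D p‖ ^ 2 ∂μ ≤ M

section Fatou

variable {α : Type*} [MeasurableSpace α] {μ : Measure α} {ψ : α → ℝ} {Dn : ℕ → α → ℂ}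
  {D : α → ℂ} {M : ℝ}

lemma WeightedInvSqLE.nonneg (hψ : 0 ≤ᵐ[μ] ψ) (h : WeightedInvSqLE μ ψ D M) : 0 ≤ M :=
  (integral_nonneg_of_ae (hψ.mono fun _ hp => div_nonneg hp (sq_nonneg _))).trans h.2

/-- Fatou's lemma. Dividing in `ℝ≥0∞`, where `x / 0 = ∞` for `x ≠ 0`, makes the bound also see
the zeros of the limit `D` (the real quotient would be `0` there). -/
lemma lintegral_ofReal_div_enorm_sq_le_of_tendsto (hψ : 0 ≤ᵐ[μ] ψ)
    (hne : ∀ n, ∀ᵐ p ∂μ, Dn n p ≠ 0)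
    (hlim : ∀ᵐ p ∂μ, Tendsto (fun n => Dn n p) atTop (𝓝 (D p)))
    (hbd : ∀ n, WeightedInvSqLE μ ψ (Dn n) M) :
    ∫⁻ p, ENNReal.ofReal (ψ p) / ‖D p‖ₑ ^ 2 ∂μ ≤ ENNReal.ofReal M := by
  set f : ℕ → α → ENNReal := fun n p => ENNReal.ofReal (ψ p / ‖Dn n p‖ ^ 2)
  have hf_lim : ∀ᵐ p ∂μ,
      Tendsto (fun n => f n p) atTop (𝓝 (ENNReal.ofReal (ψ p) / ‖D p‖ₑ ^ 2)) := by
    filter_upwards [ae_all_iff.2 hne, hlim] with p hp hlimp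
    have hf : ∀ n, f n p = ENNReal.ofReal (ψ p) / ‖Dn n p‖ₑ ^ 2 := fun n => by
      show ENNReal.ofReal (ψ p / ‖Dn n p‖ ^ 2) = _
      rw [ENNReal.ofReal_div_of_pos (by positivity [norm_pos_iff.2 (hp n)]),
        ENNReal.ofReal_pow (norm_nonneg _), ofReal_norm]
    simp only [hf]
    exact ENNReal.Tendsto.const_div (((ENNReal.continuous_pow 2).tendsto _).comp hlimp.enorm)
      (Or.inr ENNReal.ofReal_ne_top)
  calc ∫⁻ p, ENNReal.ofReal (ψ p) / ‖D p‖ₑ ^ 2 ∂μ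
      = ∫⁻ p, liminf (fun n => f n p) atTop ∂μ :=
        lintegral_congr_ae (hf_lim.mono fun _ hp => hp.liminf_eq.symm)
    _ ≤ liminf (fun n => ∫⁻ p, f n p ∂μ) atTop :=
        lintegral_liminf_le' fun n => (hbd n).1.aemeasurable.ennreal_ofReal
    _ ≤ ENNReal.ofReal M := by
        refine liminf_le_of_frequently_le' (Frequently.of_forall fun n => ?_)
        rw [← ofReal_integral_eq_lintegral_ofReal (hbd n).1
          (hψ.mono fun _ hp => div_nonneg hp (sq_nonneg _))]
        exact ENNReal.ofReal_le_ofReal (hbd n).2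

lemma WeightedInvSqLE.of_lintegral_le (hψ : 0 ≤ᵐ[μ] ψ) (hM : 0 ≤ M)
    (hmeas : AEStronglyMeasurable (fun p => ψ p / ‖D p‖ ^ 2) μ)
    (h : ∫⁻ p, ENNReal.ofReal (ψ p) / ‖D p‖ₑ ^ 2 ∂μ ≤ ENNReal.ofReal M) :
    WeightedInvSqLE μ ψ D M := by
  have hnn : 0 ≤ᵐ[μ] fun p => ψ p / ‖D p‖ ^ 2 :=
    hψ.mono fun _ hp => div_nonneg hp (sq_nonneg _)
  have hle : ∫⁻ p, ENNReal.ofReal (ψ p / ‖D p‖ ^ 2) ∂μ ≤ ENNReal.ofReal M := by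
    refine (lintegral_mono fun p => ?_).trans h
    rw [← ofReal_norm, ← ENNReal.ofReal_pow (norm_nonneg _)]
    exact ENNReal.ofReal_div_le (sq_nonneg _)
  refine ⟨⟨hmeas, (hasFiniteIntegral_iff_ofReal hnn).2 (hle.trans_lt ENNReal.ofReal_lt_top)⟩, ?_⟩
  rw [integral_eq_lintegral_of_nonneg_ae hnn hmeas]
  exact ENNReal.toReal_le_of_le_ofReal hM hle

lemma ae_nonpos_of_lintegral_ofReal_div_enorm_sq_ne_top
    (hmeas : AEMeasurable (fun p => ENNReal.ofReal (ψ p) / ‖D p‖ₑ ^ 2) μ)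
    (h : ∫⁻ p, ENNReal.ofReal (ψ p) / ‖D p‖ₑ ^ 2 ∂μ ≠ ⊤) :
    ∀ᵐ p ∂μ, D p = 0 → ψ p ≤ 0 := by
  filter_upwards [ae_lt_top' hmeas h] with p hp hD
  by_contra! hψ
  rw [hD, enorm_zero, zero_pow two_ne_zero, ENNReal.div_zero (ENNReal.ofReal_pos.2 hψ).ne'] at hp
  exact lt_irrefl _ hp

lemma weightedInvSqLE_of_tendsto (hψm : AEMeasurable ψ μ) (hDm : AEMeasurable D μ)
    (hψ : 0 ≤ᵐ[μ] ψ) (hne : ∀ n, ∀ᵐ p ∂μ, Dn n p ≠ 0)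
    (hlim : ∀ᵐ p ∂μ, Tendsto (fun n => Dn n p) atTop (𝓝 (D p)))
    (hbd : ∀ n, WeightedInvSqLE μ ψ (Dn n) M) :
    WeightedInvSqLE μ ψ D M ∧ ∀ᵐ p ∂μ, D p = 0 → ψ p ≤ 0 := by
  have h := lintegral_ofReal_div_enorm_sq_le_of_tendsto hψ hne hlim hbd
  exact ⟨.of_lintegral_le hψ ((hbd 0).nonneg hψ)
      (hψm.div (hDm.norm.pow_const 2)).aestronglyMeasurable h,
    ae_nonpos_of_lintegral_ofReal_div_enorm_sq_ne_top
      (hψm.ennreal_ofReal.div (hDm.enorm.pow_const 2)) (h.trans_lt ENNReal.ofReal_lt_top).ne⟩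

end Fatou

lemma norm_div_sub_div_le {𝕜 : Type*} [NormedField 𝕜] {x a b : 𝕜} {N : ℝ} (ha : a ≠ 0)
    (hb : b ≠ 0) (hN : ‖x‖ * ‖a - b‖ ≤ N) :
    ‖x / a - x / b‖ ≤ (N / ‖a‖ ^ 2 + N / ‖b‖ ^ 2) / 2 := by
  have hu := norm_pos_iff.2 ha
  have hv := norm_pos_iff.2 hb
  have hN0 : 0 ≤ N := (by positivity : 0 ≤ ‖x‖ * ‖a - b‖).trans hN
  rw [div_sub_div _ _ ha hb, mul_comm a x, ← mul_sub, norm_div, norm_mul, norm_mul, norm_sub_rev b]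
  calc ‖x‖ * ‖a - b‖ / (‖a‖ * ‖b‖) ≤ N / (‖a‖ * ‖b‖) := by gcongr
    _ ≤ (N / ‖a‖ ^ 2 + N / ‖b‖ ^ 2) / 2 := by
      rw [div_add_div _ _ (by positivity) (by positivity), div_div, div_le_div_iff₀ (by positivity)
        (by positivity)]
      nlinarith [mul_nonneg (mul_nonneg hN0 (mul_pos hu hv).le) (sq_nonneg (‖a‖ - ‖b‖))]

section Den

variable {H : Measure (ℝ × ℝ)} {m g : ℂ} {p : ℝ × ℝ}

lemma measurable_den (m g : ℂ) : Measurable (den m g) := by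
  unfold den; fun_prop

lemma tendsto_den {mn gn : ℕ → ℂ} {mt gt : ℂ} (hmn : Tendsto mn atTop (𝓝 mt))
    (hgn : Tendsto gn atTop (𝓝 gt)) (p : ℝ × ℝ) :
    Tendsto (fun n => den (mn n) (gn n) p) atTop (𝓝 (den mt gt p)) :=
  ((hgn.const_mul _).const_add _).add (hmn.const_mul _)

lemma norm_den_sub_den_le {m' g' : ℂ} (hs : 0 ≤ p.1) (ht : 0 ≤ p.2) :
    ‖den m g p - den m' g' p‖ ≤ ‖g - g'‖ * p.1 + ‖m - m'‖ * p.2 := by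
  calc ‖den m g p - den m' g' p‖ = ‖(p.1 : ℂ) * (g - g') + p.2 * (m - m')‖ := by
        unfold den; ring_nf
    _ ≤ ‖g - g'‖ * p.1 + ‖m - m'‖ * p.2 := (norm_add_le _ _).trans_eq (by
        simp [Complex.norm_real, abs_of_nonneg hs, abs_of_nonneg ht, mul_comm])

lemma ae_den_ne_zero (hHsupp : ∀ᵐ p ∂H, 0 ≤ p.1 ∧ 0 ≤ p.2)
    (hs : ∀ᵐ p ∂H, den m g p = 0 → p.1 ≤ 0) (ht : ∀ᵐ p ∂H, den m g p = 0 → p.2 ≤ 0) :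
    ∀ᵐ p ∂H, den m g p ≠ 0 := by
  filter_upwards [hHsupp, hs, ht] with p ⟨hs0, ht0⟩ hs ht hD
  have hp : p = 0 := Prod.ext (le_antisymm (hs hD) hs0) (le_antisymm (ht hD) ht0)
  simp [hp, den] at hD

lemma norm_inv_den_sq_le (hs : 0 ≤ p.1) (ht : 0 ≤ p.2) :
    ‖(den m g p)⁻¹‖ ^ 2 ≤
      1 + 2 * ‖g‖ * (p.1 / ‖den m g p‖ ^ 2) + 2 * ‖m‖ * (p.2 / ‖den m g p‖ ^ 2) := by
  have h1 : 1 ≤ ‖den m g p‖ + (‖g‖ * p.1 + ‖m‖ * p.2) := by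
    have := norm_den_sub_den_le (m := m) (g := g) (m' := 0) (g' := 0) hs ht
    simp only [sub_zero, den, mul_zero, add_zero] at this ⊢
    linarith [norm_sub_norm_le (1 : ℂ) (1 + p.1 * g + p.2 * m), norm_one (α := ℂ),
      norm_sub_rev (1 : ℂ) (1 + p.1 * g + p.2 * m)]
  rw [norm_inv, inv_pow]
  rcases (norm_nonneg (den m g p)).eq_or_lt with h0 | hpos
  · simp [← h0]
  · rw [inv_le_iff_one_le_mul₀ (by positivity)]
    field_simp
    -- `u² + 2w - 1 = (u - 1)² + 2 (u + w - 1)` with `u = ‖den m g p‖` and `h1 : 1 ≤ u + w`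
    nlinarith [sq_nonneg (‖den m g p‖ - 1)]

lemma integrable_inv_den [IsFiniteMeasure H] (hHsupp : ∀ᵐ p ∂H, 0 ≤ p.1 ∧ 0 ≤ p.2)
    (hs : Integrable (fun p => p.1 / ‖den m g p‖ ^ 2) H)
    (ht : Integrable (fun p => p.2 / ‖den m g p‖ ^ 2) H) :
    Integrable (fun p => (den m g p)⁻¹) H := by
  have hmeas : Measurable fun p => (den m g p)⁻¹ := (measurable_den m g).inv
  refine ((memLp_two_iff_integrable_sq_norm hmeas.aestronglyMeasurable).2 ?_).integrable
    one_le_two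
  refine (((integrable_const 1).add (hs.const_mul (2 * ‖g‖))).add
    (ht.const_mul (2 * ‖m‖))).mono' (hmeas.norm.pow_const 2).aestronglyMeasurable ?_
  filter_upwards [hHsupp] with p hp
  rw [Real.norm_of_nonneg (by positivity)]
  exact norm_inv_den_sq_le hp.1 hp.2

lemma integrable_snd_div_den [IsFiniteMeasure H]
    (h : Integrable (fun p => p.2 ^ 2 / ‖den m g p‖ ^ 2) H) :
    Integrable (fun p => (p.2 : ℂ) / den m g p) H := by
  have hmeas : Measurable fun p : ℝ × ℝ => (p.2 : ℂ) / den m g p :=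
    (Complex.measurable_ofReal.comp measurable_snd).div (measurable_den m g)
  refine ((memLp_two_iff_integrable_sq_norm hmeas.aestronglyMeasurable).2 ?_).integrable
    one_le_two
  simpa [norm_div, div_pow] using h

lemma norm_integral_div_den_sub_le {f : ℝ × ℝ → ℂ} {ψ₁ ψ₂ : ℝ × ℝ → ℝ} {m' g' : ℂ} {M : ℝ}
    (hHsupp : ∀ᵐ p ∂H, 0 ≤ p.1 ∧ 0 ≤ p.2)
    (hψ₁ : ∀ᵐ p ∂H, ‖f p‖ * p.1 ≤ ψ₁ p) (hψ₂ : ∀ᵐ p ∂H, ‖f p‖ * p.2 ≤ ψ₂ p)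
    (hne : ∀ᵐ p ∂H, den m g p ≠ 0) (hne' : ∀ᵐ p ∂H, den m' g' p ≠ 0)
    (hf : Integrable (fun p => f p / den m g p) H)
    (hf' : Integrable (fun p => f p / den m' g' p) H)
    (h₁ : WeightedInvSqLE H ψ₁ (den m g) M) (h₁' : WeightedInvSqLE H ψ₁ (den m' g') M)
    (h₂ : WeightedInvSqLE H ψ₂ (den m g) M) (h₂' : WeightedInvSqLE H ψ₂ (den m' g') M) :
    ‖∫ p, f p / den m g p ∂H - ∫ p, f p / den m' g' p ∂H‖ ≤ ‖g - g'‖ * M + ‖m - m'‖ * M := by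
  set G : ℝ × ℝ → ℝ := fun p =>
    (‖g - g'‖ * (ψ₁ p / ‖den m g p‖ ^ 2 + ψ₁ p / ‖den m' g' p‖ ^ 2)
      + ‖m - m'‖ * (ψ₂ p / ‖den m g p‖ ^ 2 + ψ₂ p / ‖den m' g' p‖ ^ 2)) / 2 with hG
  have hI₁ : Integrable (fun p => ψ₁ p / ‖den m g p‖ ^ 2 + ψ₁ p / ‖den m' g' p‖ ^ 2) H :=
    h₁.1.add h₁'.1
  have hI₂ : Integrable (fun p => ψ₂ p / ‖den m g p‖ ^ 2 + ψ₂ p / ‖den m' g' p‖ ^ 2) H :=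
    h₂.1.add h₂'.1
  have hpt : ∀ᵐ p ∂H, ‖f p / den m g p - f p / den m' g' p‖ ≤ G p := by
    filter_upwards [hHsupp, hψ₁, hψ₂, hne, hne'] with p hp h₁p h₂p hnp hnp'
    refine (norm_div_sub_div_le (N := ‖g - g'‖ * ψ₁ p + ‖m - m'‖ * ψ₂ p) hnp hnp' ?_).trans_eq
      (by rw [hG]; ring)
    calc ‖f p‖ * ‖den m g p - den m' g' p‖
        ≤ ‖f p‖ * (‖g - g'‖ * p.1 + ‖m - m'‖ * p.2) := by
          gcongr; exact norm_den_sub_den_le hp.1 hp.2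
      _ ≤ ‖g - g'‖ * ψ₁ p + ‖m - m'‖ * ψ₂ p := by
          nlinarith [norm_nonneg (g - g'), norm_nonneg (m - m')]
  calc ‖∫ p, f p / den m g p ∂H - ∫ p, f p / den m' g' p ∂H‖
      = ‖∫ p, (f p / den m g p - f p / den m' g' p) ∂H‖ := by rw [integral_sub hf hf']
    _ ≤ ∫ p, G p ∂H :=
        norm_integral_le_of_norm_le (((hI₁.const_mul _).add (hI₂.const_mul _)).div_const 2) hpt
    _ = (‖g - g'‖ * (∫ p, ψ₁ p / ‖den m g p‖ ^ 2 ∂H + ∫ p, ψ₁ p / ‖den m' g' p‖ ^ 2 ∂H)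
          + ‖m - m'‖ * (∫ p, ψ₂ p / ‖den m g p‖ ^ 2 ∂H + ∫ p, ψ₂ p / ‖den m' g' p‖ ^ 2 ∂H))
          / 2 := by
        rw [hG, integral_div, integral_add (hI₁.const_mul _) (hI₂.const_mul _),
          integral_const_mul, integral_const_mul, integral_add h₁.1 h₁'.1,
          integral_add h₂.1 h₂'.1]
    _ ≤ (‖g - g'‖ * (M + M) + ‖m - m'‖ * (M + M)) / 2 := by
        gcongr
        exacts [h₁.2, h₁'.2, h₂.2, h₂'.2]
    _ = ‖g - g'‖ * M + ‖m - m'‖ * M := by ring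

lemma tendsto_integral_div_den {f : ℝ × ℝ → ℂ} {ψ₁ ψ₂ : ℝ × ℝ → ℝ} {mn gn : ℕ → ℂ}
    {mt gt : ℂ} {M : ℝ} (hHsupp : ∀ᵐ p ∂H, 0 ≤ p.1 ∧ 0 ≤ p.2)
    (hψ₁ : ∀ᵐ p ∂H, ‖f p‖ * p.1 ≤ ψ₁ p) (hψ₂ : ∀ᵐ p ∂H, ‖f p‖ * p.2 ≤ ψ₂ p)
    (hmn : Tendsto mn atTop (𝓝 mt)) (hgn : Tendsto gn atTop (𝓝 gt))
    (hne : ∀ n, ∀ᵐ p ∂H, den (mn n) (gn n) p ≠ 0) (hD : ∀ᵐ p ∂H, den mt gt p ≠ 0)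
    (hfn : ∀ n, Integrable (fun p => f p / den (mn n) (gn n) p) H)
    (hf : Integrable (fun p => f p / den mt gt p) H)
    (h₁n : ∀ n, WeightedInvSqLE H ψ₁ (den (mn n) (gn n)) M)
    (h₁ : WeightedInvSqLE H ψ₁ (den mt gt) M)
    (h₂n : ∀ n, WeightedInvSqLE H ψ₂ (den (mn n) (gn n)) M)
    (h₂ : WeightedInvSqLE H ψ₂ (den mt gt) M) :
    Tendsto (fun n => ∫ p, f p / den (mn n) (gn n) p ∂H) atTop
      (𝓝 (∫ p, f p / den mt gt p ∂H)) := by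
  rw [tendsto_iff_norm_sub_tendsto_zero]
  refine squeeze_zero (fun n => norm_nonneg _) (fun n => norm_integral_div_den_sub_le hHsupp
    hψ₁ hψ₂ (hne n) hD (hfn n) hf (h₁n n) h₁ (h₂n n) h₂) ?_
  simpa using ((hgn.sub_const gt).norm.mul_const M).add ((hmn.sub_const mt).norm.mul_const M)

lemma tendsto_integral_inv_den {mn gn : ℕ → ℂ} {mt gt : ℂ} {M : ℝ}
    (hHsupp : ∀ᵐ p ∂H, 0 ≤ p.1 ∧ 0 ≤ p.2)
    (hmn : Tendsto mn atTop (𝓝 mt)) (hgn : Tendsto gn atTop (𝓝 gt))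
    (hne : ∀ n, ∀ᵐ p ∂H, den (mn n) (gn n) p ≠ 0) (hD : ∀ᵐ p ∂H, den mt gt p ≠ 0)
    (hfn : ∀ n, Integrable (fun p => (den (mn n) (gn n) p)⁻¹) H)
    (hf : Integrable (fun p => (den mt gt p)⁻¹) H)
    (hsn : ∀ n, WeightedInvSqLE H Prod.fst (den (mn n) (gn n)) M)
    (hs : WeightedInvSqLE H Prod.fst (den mt gt) M)
    (htn : ∀ n, WeightedInvSqLE H Prod.snd (den (mn n) (gn n)) M)
    (ht : WeightedInvSqLE H Prod.snd (den mt gt) M) :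
    Tendsto (fun n => ∫ p, (den (mn n) (gn n) p)⁻¹ ∂H) atTop
      (𝓝 (∫ p, (den mt gt p)⁻¹ ∂H)) := by
  simpa only [one_div] using tendsto_integral_div_den (f := fun _ => 1) hHsupp
    (ae_of_all H fun p => by simp) (ae_of_all H fun p => by simp) hmn hgn hne hD
    (fun n => by simpa only [one_div] using hfn n) (by simpa only [one_div] using hf)
    hsn hs htn ht

lemma tendsto_integral_snd_div_den {mn gn : ℕ → ℂ} {mt gt : ℂ} {M : ℝ}
    (hHsupp : ∀ᵐ p ∂H, 0 ≤ p.1 ∧ 0 ≤ p.2)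
    (hmn : Tendsto mn atTop (𝓝 mt)) (hgn : Tendsto gn atTop (𝓝 gt))
    (hne : ∀ n, ∀ᵐ p ∂H, den (mn n) (gn n) p ≠ 0) (hD : ∀ᵐ p ∂H, den mt gt p ≠ 0)
    (hfn : ∀ n, Integrable (fun p => (p.2 : ℂ) / den (mn n) (gn n) p) H)
    (hf : Integrable (fun p => (p.2 : ℂ) / den mt gt p) H)
    (hstn : ∀ n, WeightedInvSqLE H (fun p => p.1 * p.2) (den (mn n) (gn n)) M)
    (hst : WeightedInvSqLE H (fun p => p.1 * p.2) (den mt gt) M)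
    (httn : ∀ n, WeightedInvSqLE H (fun p => p.2 ^ 2) (den (mn n) (gn n)) M)
    (htt : WeightedInvSqLE H (fun p => p.2 ^ 2) (den mt gt) M) :
    Tendsto (fun n => ∫ p, (p.2 : ℂ) / den (mn n) (gn n) p ∂H) atTop
      (𝓝 (∫ p, (p.2 : ℂ) / den mt gt p ∂H)) :=
  tendsto_integral_div_den hHsupp
    (hHsupp.mono fun p hp => by rw [Complex.norm_real, Real.norm_of_nonneg hp.2, mul_comm])
    (hHsupp.mono fun p hp => by rw [Complex.norm_real, Real.norm_of_nonneg hp.2, sq])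
    hmn hgn hne hD hfn hf hstn hst httn htt

end Den

theorem stmt6_general (H : Measure (ℝ × ℝ)) [IsProbabilityMeasure H]
    (hHsupp : ∀ᵐ p ∂H, 0 ≤ p.1 ∧ 0 ≤ p.2)
    (c : ℝ)
    (zn : ℕ → ℂ) (z : ℂ)
    (hz : Tendsto zn atTop (𝓝 z))
    (mn gn : ℕ → ℂ) (mt gt : ℂ)
    (hS : ∀ n, SatS H c (zn n) (mn n) (gn n))
    (hmn : Tendsto mn atTop (𝓝 mt)) (hgn : Tendsto gn atTop (𝓝 gt))
    (δ : ℝ) (hδ : 0 < δ) (hglow : ∀ n, δ ≤ ‖gn n‖)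
    (M : ℝ)
    (hA1 : ∀ n, IntA1 H (mn n) (gn n) ∧ A1 H (mn n) (gn n) ≤ M)
    (hA2 : ∀ n, IntA2 H (mn n) (gn n) ∧ A2 H (mn n) (gn n) ≤ M)
    (hB1 : ∀ n, IntB H (mn n) (gn n) 1 ∧ B H (mn n) (gn n) 1 ≤ M)
    (hB2 : ∀ n, IntB H (mn n) (gn n) 2 ∧ B H (mn n) (gn n) 2 ≤ M) :
    δ ≤ ‖gt‖ ∧
      (∀ᵐ p ∂H, den mt gt p ≠ 0) ∧
      Integrable (fun p => (den mt gt p)⁻¹) H ∧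
      Integrable (fun p => (p.2 : ℂ) / den mt gt p) H ∧
      SatS H c z mt gt := by
  have hgt : δ ≤ ‖gt‖ := ge_of_tendsto' hgn.norm hglow
  have hgt0 : gt ≠ 0 := norm_pos_iff.mp (hδ.trans_le hgt)
  have hne n := (hS n).2.1
  have hlimit {ψ : ℝ × ℝ → ℝ} (hψm : Measurable ψ) (hψ : 0 ≤ᵐ[H] ψ)
      (hbd : ∀ n, WeightedInvSqLE H ψ (den (mn n) (gn n)) M) :=
    weightedInvSqLE_of_tendsto hψm.aemeasurable (measurable_den mt gt).aemeasurable hψ hne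
      (ae_of_all H (tendsto_den hmn hgn)) hbd
  have hB1' n : WeightedInvSqLE H Prod.snd (den (mn n) (gn n)) M := by
    simpa only [WeightedInvSqLE, IntB, B, pow_one] using hB1 n
  obtain ⟨hs, hs0⟩ := hlimit measurable_fst (hHsupp.mono fun _ hp => hp.1) hA1
  obtain ⟨ht, ht0⟩ := hlimit measurable_snd (hHsupp.mono fun _ hp => hp.2) hB1'
  obtain ⟨hst, -⟩ := hlimit (measurable_fst.mul measurable_snd)
    (hHsupp.mono fun _ hp => mul_nonneg hp.1 hp.2) hA2
  obtain ⟨htt, -⟩ := hlimit (measurable_snd.pow_const 2) (ae_of_all H fun p => sq_nonneg p.2) hB2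
  have hD := ae_den_ne_zero hHsupp hs0 ht0
  have hI₁ := integrable_inv_den hHsupp hs.1 ht.1
  have hI₂ := integrable_snd_div_den htt.1
  have hlim₁ := tendsto_integral_inv_den hHsupp hmn hgn hne hD (fun n => (hS n).2.2.1) hI₁
    hA1 hs hB1' ht
  have hlim₂ := tendsto_integral_snd_div_den hHsupp hmn hgn hne hD (fun n => (hS n).2.2.2.1) hI₂
    hA2 hst hB2 htt
  refine ⟨hgt, hD, hI₁, hI₂, hgt0, hD, hI₁, hI₂, ?_, ?_⟩
  · exact tendsto_nhds_unique (((hz.mul hmn).add_const _).add (hlim₁.const_mul _))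
      (tendsto_const_nhds.congr fun n => ((hS n).2.2.2.2.1).symm)
  · exact tendsto_nhds_unique ((hz.add (tendsto_const_nhds.div hgn hgt0)).sub (hlim₂.const_mul _))
      (tendsto_const_nhds.congr fun n => ((hS n).2.2.2.2.2).symm)

theorem stmt6 (H : Measure (ℝ × ℝ)) [IsProbabilityMeasure H]
    (hHsupp : ∀ᵐ p ∂H, 0 ≤ p.1 ∧ 0 ≤ p.2)
    (c : ℝ) (hc : 0 < c)
    (zn : ℕ → ℂ) (z : ℂ) (hzn : ∀ n, 0 < (zn n).im)
    (hz : Tendsto zn atTop (𝓝 z)) (hzim : 0 ≤ z.im) (hz0 : z ≠ 0)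
    (mn gn : ℕ → ℂ) (mt gt : ℂ)
    (hS : ∀ n, SatS H c (zn n) (mn n) (gn n))
    (hmn : Tendsto mn atTop (𝓝 mt)) (hgn : Tendsto gn atTop (𝓝 gt))
    (δ : ℝ) (hδ : 0 < δ) (hglow : ∀ n, δ ≤ ‖gn n‖)
    (M : ℝ)
    (hA1 : ∀ n, IntA1 H (mn n) (gn n) ∧ A1 H (mn n) (gn n) ≤ M)
    (hA2 : ∀ n, IntA2 H (mn n) (gn n) ∧ A2 H (mn n) (gn n) ≤ M)
    (hB1 : ∀ n, IntB H (mn n) (gn n) 1 ∧ B H (mn n) (gn n) 1 ≤ M)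
    (hB2 : ∀ n, IntB H (mn n) (gn n) 2 ∧ B H (mn n) (gn n) 2 ≤ M) :
    δ ≤ ‖gt‖ ∧
      (∀ᵐ p ∂H, den mt gt p ≠ 0) ∧
      Integrable (fun p => (den mt gt p)⁻¹) H ∧
      Integrable (fun p => (p.2 : ℂ) / den mt gt p) H ∧
      SatS H c z mt gt :=
  stmt6_general H hHsupp c zn z hz mn gn mt gt hS hmn hgn δ hδ hglow M hA1 hA2 hB1 hB2

end
end

section
/- (Divergence lemma.) Let H be a nonzero finite Borel measure on ℝ² whose (topological) support is a closed subset of the closed first quadrant {(s,t) : s ≥ 0, t ≥ 0} lying at positive distance φ > 0 from the origin. Let c > 0, k > 0, η > 0, w₀ ∈ ℝ, set U = (w₀ − η, w₀ + η), and let g, m : U → ℝ be differentiable functions with g′(w) ≥ k and m′(w) ≥ k for all w ∈ U. Suppose there exists a point (s₀, t₀) in the support of H such that s₀·g(w₀) + t₀·m(w₀) + c = 0. Then there exists w* ∈ U such that ∫ |s·g(w*) + t·m(w*) + c|⁻² dH(s,t) = ∞. -/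
/-!
For `q = (s, t)` in the support near `q0`, the function `w ↦ s g(w) + t m(w) + c` has
derivative at least `kφ` and is small at `w0`, so it has a zero `τ q` close to `w0`. Being
differentiable there, it is at most `J |w - τ q|` for `|w - τ q| ≤ 1/J`; as `J` ranges over a
countable set, a single `J` works on a set `S` of positive measure. The integrand at `w` is then at
least `(J ρ)⁻²` on `S ∩ τ⁻¹[w - ρ, w + ρ]`, so it suffices to find `w` at which the image of `H|S`
under `τ` gives these intervals mass much larger than `ρ²`. Such a point exists because a bounded
set covered by `O(1/ρ)` intervals of mass `O(ρ²)` each is null. Since `τ` is only chosen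
pointwise, not measurably, this covering argument is run for outer measures.
-/

open MeasureTheory Complex Filter Topology

noncomputable section

/-- The topological support of a Borel measure on `ℝ²`: the set of points all of whose
open balls have positive measure. -/
def msupport (H : Measure (ℝ × ℝ)) : Set (ℝ × ℝ) :=
  {q | ∀ ε > 0, 0 < H (Metric.ball q ε)}

open Metric Set
open scoped ENNReal

theorem Icc_subset_biUnion_closedBall {a ρ : ℝ} (hρ : 0 < ρ) (N : ℕ) :
    Icc a (a + N * ρ) ⊆ ⋃ i ∈ Finset.range (N + 1), closedBall (a + i * ρ) ρ := by
  intro x ⟨hxa, hxN⟩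
  have hfl := Nat.floor_le (div_nonneg (sub_nonneg.2 hxa) hρ.le)
  have hlt := Nat.lt_floor_add_one ((x - a) / ρ)
  rw [le_div_iff₀ hρ] at hfl
  rw [div_lt_iff₀ hρ] at hlt
  refine mem_biUnion (x := ⌊(x - a) / ρ⌋₊) (Finset.mem_range.2 (Nat.lt_succ_of_le ?_)) ?_
  · exact Nat.floor_le_of_le ((div_le_iff₀ hρ).2 (by linarith))
  · rw [mem_closedBall, Real.dist_eq, abs_le]
    constructor <;> linarith

namespace MeasureTheory.OuterMeasure

theorem apply_le_of_subset_Icc (μ : OuterMeasure ℝ) {E : Set ℝ} {a ρ b : ℝ} (N : ℕ)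
    (hρ : 0 < ρ) (hE : E ⊆ Icc a (a + N * ρ))
    (hb : ∀ w ∈ E, μ (closedBall w (2 * ρ)) ≤ ENNReal.ofReal b) :
    μ E ≤ ENNReal.ofReal ((N + 1 : ℕ) * b) := by
  have hcover : E ⊆ ⋃ i ∈ Finset.range (N + 1), E ∩ closedBall (a + i * ρ) ρ := by
    rw [← inter_iUnion₂]
    exact subset_inter subset_rfl (hE.trans (Icc_subset_biUnion_closedBall hρ N))
  have hpiece (i : ℕ) : μ (E ∩ closedBall (a + i * ρ) ρ) ≤ ENNReal.ofReal b := by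
    rcases (E ∩ closedBall (a + i * ρ) ρ).eq_empty_or_nonempty with hempty | ⟨w, hwE, hwB⟩
    · simp [hempty]
    refine (μ.mono fun y hy => ?_).trans (hb w hwE)
    have hyB : dist y (a + i * ρ) ≤ ρ := hy.2
    rw [mem_closedBall] at hwB ⊢
    linarith [dist_triangle_right y w (a + i * ρ)]
  calc μ E ≤ ∑ i ∈ Finset.range (N + 1), μ (E ∩ closedBall (a + i * ρ) ρ) :=
        (μ.mono hcover).trans (measure_biUnion_finset_le _ _)
    _ ≤ ∑ _i ∈ Finset.range (N + 1), ENNReal.ofReal b := Finset.sum_le_sum fun i _ => hpiece i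
    _ = ENNReal.ofReal ((N + 1 : ℕ) * b) := by
        rw [Finset.sum_const, Finset.card_range, nsmul_eq_mul,
          ENNReal.ofReal_mul (Nat.cast_nonneg _), ENNReal.ofReal_natCast]

theorem apply_eq_zero_of_apply_closedBall_le (μ : OuterMeasure ℝ) {E : Set ℝ}
    (hE : Bornology.IsBounded E) {C δ : ℝ} (hC : 0 ≤ C) (hδ : 0 < δ)
    (h : ∀ w ∈ E, ∀ ρ, 0 < ρ → ρ ≤ δ → μ (closedBall w ρ) ≤ ENNReal.ofReal (C * ρ ^ 2)) :
    μ E = 0 := by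
  obtain ⟨R, hR⟩ := (isBounded_iff_subset_closedBall 0).1 hE
  set L := 2 * (|R| + 1)
  have hL : 0 < L := by positivity
  have hEL : E ⊆ Icc (-(|R| + 1)) (-(|R| + 1) + L) := fun x hx => by
    have := abs_le.1 (mem_closedBall_zero_iff.1 (hR hx))
    constructor <;> linarith [le_abs_self R]
  have hbound : ∀ᶠ N : ℕ in atTop, μ E ≤ ENNReal.ofReal (8 * C * L ^ 2 / N) := by
    filter_upwards [eventually_ge_atTop 1, eventually_ge_atTop ⌈2 * L / δ⌉₊] with N hN1 hNδ
    have hN : (1 : ℝ) ≤ N := by exact_mod_cast hN1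
    set ρ := L / N with hρ_def
    have hρ : 0 < ρ := by positivity
    have hNρ : N * ρ = L := by rw [hρ_def]; field_simp
    have h2ρ : 2 * ρ ≤ δ := by
      have := (div_le_iff₀ hδ).1 (Nat.ceil_le.1 hNδ)
      nlinarith
    refine (apply_le_of_subset_Icc μ N hρ (hNρ ▸ hEL) fun w hw =>
      h w hw (2 * ρ) (by positivity) h2ρ).trans (ENNReal.ofReal_le_ofReal ?_)
    rw [le_div_iff₀ (by positivity), ← hNρ]
    push_cast
    have : 0 ≤ C * ρ ^ 2 * N := by positivity
    nlinarith
  have hlim : Tendsto (fun N : ℕ => ENNReal.ofReal (8 * C * L ^ 2 / N)) atTop (𝓝 0) := by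
    simpa using ENNReal.tendsto_ofReal (tendsto_const_div_atTop_nhds_zero_nat (8 * C * L ^ 2))
  exact le_antisymm (ge_of_tendsto hlim hbound) bot_le

theorem exists_forall_lt_apply_closedBall (μ : OuterMeasure ℝ) {A : Set ℝ}
    (hA : Bornology.IsBounded A) (hμA : μ A ≠ 0) {δ : ℝ} (hδ : 0 < δ) :
    ∃ w ∈ A, ∀ n : ℕ, ∃ ρ, 0 < ρ ∧ ρ ≤ δ ∧ ENNReal.ofReal (n * ρ ^ 2) < μ (closedBall w ρ) := by
  by_contra! hsmall
  refine hμA (measure_mono_null (t := ⋃ n : ℕ, {w ∈ A | ∀ ρ, 0 < ρ → ρ ≤ δ →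
      μ (closedBall w ρ) ≤ ENNReal.ofReal (n * ρ ^ 2)})
    (fun w hw => mem_iUnion.2 ((hsmall w hw).imp fun n hn => ⟨hw, hn⟩))
    (measure_iUnion_null fun n => apply_eq_zero_of_apply_closedBall_le μ
      (hA.subset (sep_subset _ _)) n.cast_nonneg hδ fun w hw => hw.2))

end MeasureTheory.OuterMeasure

namespace MeasureTheory

theorem lintegral_inv_ofReal_sq_eq_top {α : Type*} [MeasurableSpace α] (μ : Measure α)
    {F : α → ℝ} (hF : Measurable F)
    (h : ∀ n : ℕ, ∃ ρ > 0, ENNReal.ofReal (n * ρ ^ 2) ≤ μ {x | |F x| ≤ ρ}) :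
    ∫⁻ x, (ENNReal.ofReal (F x ^ 2))⁻¹ ∂μ = ⊤ := by
  refine ENNReal.eq_top_of_forall_nnreal_le fun r => ?_
  obtain ⟨n, hn⟩ := exists_nat_ge (r : ℝ)
  obtain ⟨ρ, hρ, hμ⟩ := h n
  have hρ2 : ENNReal.ofReal (ρ ^ 2) ≠ 0 := by simp [hρ.ne']
  set ε := (ENNReal.ofReal (ρ ^ 2))⁻¹
  have hsub : {x | |F x| ≤ ρ} ⊆ {x | ε ≤ (ENNReal.ofReal (F x ^ 2))⁻¹} := fun x hx =>
    ENNReal.inv_le_inv.2 <| ENNReal.ofReal_le_ofReal <|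
      sq_le_sq' (neg_le_of_abs_le hx) (le_of_abs_le hx)
  calc (r : ℝ≥0∞) ≤ n := by exact_mod_cast hn
    _ = ε * ENNReal.ofReal (n * ρ ^ 2) := by
        rw [ENNReal.ofReal_mul n.cast_nonneg, ENNReal.ofReal_natCast, mul_left_comm,
          ENNReal.inv_mul_cancel hρ2 ENNReal.ofReal_ne_top, mul_one]
    _ ≤ ε * μ {x | ε ≤ (ENNReal.ofReal (F x ^ 2))⁻¹} := by
        gcongr
        exact hμ.trans (measure_mono hsub)
    _ ≤ _ := mul_meas_ge_le_lintegral₀ (hF.pow_const 2).ennreal_ofReal.inv.aemeasurable _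

end MeasureTheory

theorem exists_lintegral_inv_sq_eq_top {α : Type*} [MeasurableSpace α] (μ : Measure α)
    {F : α → ℝ → ℝ} (hF : ∀ v, Measurable fun x => F x v) {S : Set α} (hS : μ S ≠ 0)
    {A : Set ℝ} (hA : Bornology.IsBounded A) {τ : α → ℝ} (hτ : MapsTo τ S A) {J δ : ℝ}
    (hJ : 0 < J) (hδ : 0 < δ) (hF_le : ∀ x ∈ S, ∀ v, |v - τ x| ≤ δ → |F x v| ≤ J * |v - τ x|) :
    ∃ w ∈ A, ∫⁻ x, (ENNReal.ofReal (F x w ^ 2))⁻¹ ∂μ = ⊤ := by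
  set ν := OuterMeasure.map τ (OuterMeasure.restrict S μ.toOuterMeasure)
  have hν (B : Set ℝ) : ν B = μ (τ ⁻¹' B ∩ S) := by
    rw [OuterMeasure.map_apply, OuterMeasure.restrict_apply, Measure.toOuterMeasure_apply]
  obtain ⟨w, hwA, hw⟩ := ν.exists_forall_lt_apply_closedBall hA
    (by rwa [hν, inter_eq_right.2 hτ.subset_preimage]) hδ
  refine ⟨w, hwA, lintegral_inv_ofReal_sq_eq_top μ (hF w) fun n => ?_⟩
  obtain ⟨ρ, hρ, hρδ, hlt⟩ := hw (n * ⌈J ^ 2⌉₊)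
  refine ⟨J * ρ, by positivity, ?_⟩
  calc ENNReal.ofReal (n * (J * ρ) ^ 2)
        ≤ ENNReal.ofReal (((n * ⌈J ^ 2⌉₊ : ℕ) : ℝ) * ρ ^ 2) := by
        push_cast
        rw [mul_pow, ← mul_assoc]
        gcongr
        exact Nat.le_ceil _
    _ ≤ μ (τ ⁻¹' closedBall w ρ ∩ S) := hν _ ▸ hlt.le
    _ ≤ μ {x | |F x w| ≤ J * ρ} := measure_mono fun x ⟨hxB, hxS⟩ => by
      have hwx : |w - τ x| ≤ ρ := by rwa [abs_sub_comm, ← Real.dist_eq]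
      exact (hF_le x hxS w (hwx.trans hρδ)).trans (by gcongr)

theorem exists_mem_Icc_eq_zero_of_le_deriv {f : ℝ → ℝ} {x η C : ℝ} (hη : 0 < η)
    (hf : ∀ w ∈ Ioo (x - η) (x + η), DifferentiableAt ℝ f w ∧ C ≤ deriv f w)
    (hx : |f x| ≤ C * (η / 2)) :
    ∃ w ∈ Icc (x - η / 2) (x + η / 2), f w = 0 := by
  have hcont : ContinuousOn f (Ioo (x - η) (x + η)) :=
    fun w hw => (hf w hw).1.continuousAt.continuousWithinAt
  have hincr := (convex_Ioo (x - η) (x + η)).mul_sub_le_image_sub_of_le_deriv hcont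
    (by rw [interior_Ioo]; exact fun w hw => (hf w hw).1.differentiableWithinAt)
    (by rw [interior_Ioo]; exact fun w hw => (hf w hw).2)
  have hleft := hincr (x - η / 2) ⟨by linarith, by linarith⟩ x ⟨by linarith, by linarith⟩
    (by linarith)
  have hright := hincr x ⟨by linarith, by linarith⟩ (x + η / 2) ⟨by linarith, by linarith⟩
    (by linarith)
  obtain ⟨hx₁, hx₂⟩ := abs_le.1 hx
  exact intermediate_value_Icc (by linarith)
    (hcont.mono (Icc_subset_Ioo (by linarith) (by linarith))) ⟨by linarith, by linarith⟩

theorem DifferentiableAt.exists_nat_abs_sub_le {f : ℝ → ℝ} {x : ℝ}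
    (hf : DifferentiableAt ℝ f x) :
    ∃ j : ℕ, ∀ y, |y - x| ≤ 1 / (j + 1) → |f y - f x| ≤ (j + 1) * |y - x| := by
  obtain ⟨C, hC⟩ := hf.isBigO_sub.bound
  obtain ⟨ε, hε, hball⟩ := Metric.eventually_nhds_iff.1 hC
  obtain ⟨j, hj⟩ := exists_nat_gt (max C (1 / ε))
  have hj₁ : (0 : ℝ) < j + 1 := by positivity
  refine ⟨j, fun y hy => ?_⟩
  have hyε : |y - x| < ε := by
    refine hy.trans_lt ((div_lt_iff₀ hj₁).2 ?_)
    have := (div_lt_iff₀ hε).1 ((le_max_right _ _).trans_lt hj)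
    nlinarith
  have := hball (by rwa [Real.dist_eq])
  simp only [Real.norm_eq_abs] at this
  nlinarith [le_max_left C (1 / ε), abs_nonneg (y - x)]

theorem forall_differentiableAt_and_le_deriv_mul_add_mul {g m : ℝ → ℝ} {S : Set ℝ}
    {k s t : ℝ} (c : ℝ) (hs : 0 ≤ s) (ht : 0 ≤ t)
    (hg : ∀ w ∈ S, DifferentiableAt ℝ g w ∧ k ≤ deriv g w)
    (hm : ∀ w ∈ S, DifferentiableAt ℝ m w ∧ k ≤ deriv m w) :
    ∀ w ∈ S, DifferentiableAt ℝ (fun v => s * g v + t * m v + c) w ∧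
      k * (s + t) ≤ deriv (fun v => s * g v + t * m v + c) w := by
  intro w hw
  obtain ⟨hgd, hgk⟩ := hg w hw
  obtain ⟨hmd, hmk⟩ := hm w hw
  have hd : HasDerivAt (fun v => s * g v + t * m v + c) (s * deriv g w + t * deriv m w) w :=
    ((hgd.hasDerivAt.const_mul s).add (hmd.hasDerivAt.const_mul t)).add_const c
  refine ⟨hd.differentiableAt, ?_⟩
  rw [hd.deriv]
  nlinarith

theorem exists_root_with_linear_bound {g m : ℝ → ℝ} {k η w0 c s t φ : ℝ} (hs : 0 ≤ s)
    (ht : 0 ≤ t) (hst : φ ≤ s + t) (hk : 0 ≤ k) (hη : 0 < η)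
    (hg : ∀ w ∈ Ioo (w0 - η) (w0 + η), DifferentiableAt ℝ g w ∧ k ≤ deriv g w)
    (hm : ∀ w ∈ Ioo (w0 - η) (w0 + η), DifferentiableAt ℝ m w ∧ k ≤ deriv m w)
    (hsmall : |s * g w0 + t * m w0 + c| ≤ k * φ * (η / 2)) :
    ∃ w ∈ Icc (w0 - η / 2) (w0 + η / 2), ∃ j : ℕ, ∀ v, |v - w| ≤ 1 / (j + 1) →
      |s * g v + t * m v + c| ≤ (j + 1) * |v - w| := by
  have hf := forall_differentiableAt_and_le_deriv_mul_add_mul c hs ht hg hm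
  obtain ⟨w, hw, hroot⟩ := exists_mem_Icc_eq_zero_of_le_deriv hη hf
    (hsmall.trans (by gcongr))
  obtain ⟨j, hj⟩ :=
    (hf w (Icc_subset_Ioo (by linarith) (by linarith) hw)).1.exists_nat_abs_sub_le
  exact ⟨w, hw, j, fun v hv => by simpa [hroot] using hj v hv⟩

theorem Prod.norm_le_fst_add_snd {q : ℝ × ℝ} (h₁ : 0 ≤ q.1) (h₂ : 0 ≤ q.2) :
    ‖q‖ ≤ q.1 + q.2 :=
  max_le (by simp [abs_of_nonneg h₁, h₂]) (by simp [abs_of_nonneg h₂, h₁])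

theorem measure_compl_msupport (H : Measure (ℝ × ℝ)) : H (msupport H)ᶜ = 0 := by
  refine measure_null_of_locally_null _ fun x hx => ?_
  obtain ⟨ε, hε, hball⟩ : ∃ ε > 0, H (ball x ε) ≤ 0 := by simpa [msupport] using hx
  exact ⟨ball x ε, mem_nhdsWithin_of_mem_nhds (ball_mem_nhds x hε), nonpos_iff_eq_zero.1 hball⟩

theorem stmt10_general (H : Measure (ℝ × ℝ))
    (φ : ℝ) (hφ : 0 < φ)
    (hquad : msupport H ⊆ {q : ℝ × ℝ | 0 ≤ q.1 ∧ 0 ≤ q.2})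
    (hdist : ∀ q ∈ msupport H, φ ≤ ‖q‖)
    (c k η w0 : ℝ) (hk : 0 < k) (hη : 0 < η)
    (g m : ℝ → ℝ)
    (hgdiff : ∀ w ∈ Set.Ioo (w0 - η) (w0 + η), DifferentiableAt ℝ g w ∧ k ≤ deriv g w)
    (hmdiff : ∀ w ∈ Set.Ioo (w0 - η) (w0 + η), DifferentiableAt ℝ m w ∧ k ≤ deriv m w)
    (q0 : ℝ × ℝ) (hq0 : q0 ∈ msupport H)
    (hzero : q0.1 * g w0 + q0.2 * m w0 + c = 0) :
    ∃ w ∈ Set.Ioo (w0 - η) (w0 + η),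
      ∫⁻ q, (ENNReal.ofReal ((q.1 * g w + q.2 * m w + c) ^ 2))⁻¹ ∂H = ⊤ := by
  obtain ⟨r, hr, hsmall⟩ : ∃ r > 0, ∀ q ∈ ball q0 r,
      |q.1 * g w0 + q.2 * m w0 + c| ≤ k * φ * (η / 2) := by
    have hcont : Continuous fun q : ℝ × ℝ => q.1 * g w0 + q.2 * m w0 + c := by fun_prop
    obtain ⟨r, hr, hball⟩ := Metric.eventually_nhds_iff.1
      (Metric.tendsto_nhds.1 (hzero ▸ hcont.tendsto q0) (k * φ * (η / 2)) (by positivity))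
    exact ⟨r, hr, fun q hq => by simpa [Real.dist_eq] using (hball hq).le⟩
  have hroot (q : ℝ × ℝ) (hq : q ∈ ball q0 r ∩ msupport H) :=
    exists_root_with_linear_bound (hquad hq.2).1 (hquad hq.2).2
      ((hdist q hq.2).trans (Prod.norm_le_fst_add_snd (hquad hq.2).1 (hquad hq.2).2))
      hk.le hη hgdiff hmdiff (hsmall q hq.1)
  choose! τ hτ j hj using hroot
  have hD : H (ball q0 r ∩ msupport H) ≠ 0 := by
    rw [measure_inter_conull (measure_compl_msupport H)]
    exact (hq0 r hr).ne'
  obtain ⟨n, hn⟩ := exists_measure_pos_of_not_measure_iUnion_null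
    (s := fun n => {q ∈ ball q0 r ∩ msupport H | j q = n})
    (hD ∘ measure_mono_null fun q hq => mem_iUnion.2 ⟨j q, hq, rfl⟩)
  obtain ⟨w, hw, hinf⟩ := exists_lintegral_inv_sq_eq_top H (by fun_prop) hn.ne'
    (isBounded_Icc (w0 - η / 2) (w0 + η / 2)) (fun q hq => hτ q hq.1)
    (J := n + 1) (δ := 1 / (n + 1)) (by positivity) (by positivity)
    fun q hq => hq.2 ▸ hj q hq.1
  exact ⟨w, Icc_subset_Ioo (by linarith) (by linarith) hw, hinf⟩

theorem stmt10 (H : Measure (ℝ × ℝ)) [IsFiniteMeasure H] (hH0 : H ≠ 0)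
    (φ : ℝ) (hφ : 0 < φ)
    (hquad : msupport H ⊆ {q : ℝ × ℝ | 0 ≤ q.1 ∧ 0 ≤ q.2})
    (hdist : ∀ q ∈ msupport H, φ ≤ ‖q‖)
    (c k η w0 : ℝ) (hc : 0 < c) (hk : 0 < k) (hη : 0 < η)
    (g m : ℝ → ℝ)
    (hgdiff : ∀ w ∈ Set.Ioo (w0 - η) (w0 + η), DifferentiableAt ℝ g w ∧ k ≤ deriv g w)
    (hmdiff : ∀ w ∈ Set.Ioo (w0 - η) (w0 + η), DifferentiableAt ℝ m w ∧ k ≤ deriv m w)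
    (q0 : ℝ × ℝ) (hq0 : q0 ∈ msupport H)
    (hzero : q0.1 * g w0 + q0.2 * m w0 + c = 0) :
    ∃ w ∈ Set.Ioo (w0 - η) (w0 + η),
      ∫⁻ q, (ENNReal.ofReal ((q.1 * g w + q.2 * m w + c) ^ 2))⁻¹ ∂H = ⊤ :=
  stmt10_general H φ hφ hquad hdist c k η w0 hk hη g m hgdiff hmdiff q0 hq0 hzero

end
end

section
/- (Real m if and only if real g.) Let c > 0, let x ∈ ℝ with x ≠ 0, and suppose (x, m, g) satisfies system (S) with Im m ≥ 0, Im g ≥ 0, V₀ > 0, A₂ < ∞, and 0 < B₂ < ∞. Then Im m = 0 if and only if Im g = 0. -/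
open MeasureTheory Complex Filter Topology

noncomputable section

/-
Since `x` is real, taking imaginary parts in the second equation of (S) gives the linear relation
`Im g · V₀ = c · B₂ · Im m`; as `V₀ > 0` and `c · B₂ > 0`, one side vanishes exactly when the
other does.
-/

lemma im_div_den (m g : ℂ) (p : ℝ × ℝ) :
    ((p.2 : ℂ) / den m g p).im
      = -(g.im * (p.1 * p.2 / ‖den m g p‖ ^ 2) + m.im * (p.2 ^ 2 / ‖den m g p‖ ^ 2)) := by
  rw [Complex.div_im, ← Complex.sq_norm]
  simp only [den, add_re, add_im, one_re, one_im, mul_re, mul_im, ofReal_re, ofReal_im]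
  ring

lemma im_integral_div_den {H : Measure (ℝ × ℝ)} {m g : ℂ}
    (hint : Integrable (fun p => (p.2 : ℂ) / den m g p) H)
    (hA2 : IntA2 H m g) (hB2 : IntB H m g 2) :
    (∫ p, (p.2 : ℂ) / den m g p ∂H).im = -(g.im * A2 H m g + m.im * B H m g 2) := by
  refine (integral_im hint).symm.trans ?_
  simp only [RCLike.im_eq_complex_im, im_div_den]
  rw [integral_neg, integral_add (hA2.const_mul _) (hB2.const_mul _),
    integral_const_mul, integral_const_mul]
  rfl

lemma im_mul_V0_eq_of_satS {H : Measure (ℝ × ℝ)} {c x : ℝ} {m g : ℂ}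
    (hS : SatS H c (x : ℂ) m g) (hA2 : IntA2 H m g) (hB2 : IntB H m g 2) :
    g.im * V0 H c m g = c * B H m g 2 * m.im := by
  obtain ⟨-, -, -, hint, -, heq⟩ := hS
  have him := congrArg Complex.im heq
  simp only [sub_im, add_im, ofReal_im, one_div, inv_im, mul_im, ofReal_re, zero_im,
    im_integral_div_den hint hA2 hB2, normSq_eq_norm_sq] at him
  unfold V0
  linear_combination -him

theorem stmt11_general (H : Measure (ℝ × ℝ))
    (c : ℝ) (hc : 0 < c)
    (x : ℝ)
    (m g : ℂ) (hS : SatS H c (x : ℂ) m g)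
    (hV0 : 0 < V0 H c m g)
    (hA2 : IntA2 H m g) (hB2 : IntB H m g 2) (hB2pos : 0 < B H m g 2) :
    m.im = 0 ↔ g.im = 0 := by
  rw [← mul_eq_zero_iff_left (mul_pos hc hB2pos).ne', ← im_mul_V0_eq_of_satS hS hA2 hB2,
    mul_eq_zero_iff_right hV0.ne']

theorem stmt11 (H : Measure (ℝ × ℝ)) [IsProbabilityMeasure H]
    (hHsupp : ∀ᵐ p ∂H, 0 ≤ p.1 ∧ 0 ≤ p.2)
    (c : ℝ) (hc : 0 < c)
    (x : ℝ) (hx : x ≠ 0)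
    (m g : ℂ) (hS : SatS H c (x : ℂ) m g)
    (hm : 0 ≤ m.im) (hg : 0 ≤ g.im)
    (hV0 : 0 < V0 H c m g)
    (hA2 : IntA2 H m g) (hB2 : IntB H m g 2) (hB2pos : 0 < B H m g 2) :
    m.im = 0 ↔ g.im = 0 :=
  stmt11_general H c hc x m g hS hV0 hA2 hB2 hB2pos
end
end

section
/- (Uniqueness of m for a given g in the reduced equation.) Let H be a Borel probability measure on [0,∞)×[0,∞), let c > 0, and let g ∈ ℂ with g ≠ 0. Suppose m₁, m₂ ∈ ℂ are such that for i = 1, 2: 1 + s·g + t·mᵢ ≠ 0 for H-almost every (s,t), the equation c·g²·∫ s dH(s,t)/(1 + s·g + t·mᵢ) + mᵢ − g = 0 holds, and c·∫ s·t/|1 + s·g + t·mᵢ|² dH(s,t) < 1/|g|². Then m₁ = m₂. -/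
/-!
Subtracting the two equations and using `1/D₂ - 1/D₁ = t (m₁ - m₂)/(D₁ D₂)` for the
denominators `Dᵢ = 1 + s g + t mᵢ` gives `m₁ - m₂ = c g² (m₁ - m₂) ∫ s t/(D₁ D₂) dH`.
If `m₁ ≠ m₂`, then `c g² ∫ s t/(D₁ D₂) dH = 1`; but `1/(|D₁| |D₂|) ≤ (1/|D₁|² + 1/|D₂|²)/2`
bounds the modulus of the left side by the average of `c |g|² ∫ s t/|Dᵢ|² dH`, which is `< 1`.
-/

open MeasureTheory Complex Filter Topology

noncomputable section

lemma den_sub_den (m₁ m₂ g : ℂ) (p : ℝ × ℝ) :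
    den m₁ g p - den m₂ g p = p.2 * (m₁ - m₂) := by
  simp only [den]
  ring

lemma div_den_sub_div_den {m₁ m₂ g : ℂ} {p : ℝ × ℝ} (h₁ : den m₁ g p ≠ 0)
    (h₂ : den m₂ g p ≠ 0) :
    (p.1 : ℂ) / den m₂ g p - p.1 / den m₁ g p
      = (m₁ - m₂) * (p.1 * p.2 / (den m₁ g p * den m₂ g p)) := by
  rw [div_sub_div _ _ h₂ h₁, mul_comm (den m₂ g p), ← mul_sub, den_sub_den]
  ring

lemma integral_div_den_sub_integral_div_den {H : Measure (ℝ × ℝ)} {m₁ m₂ g : ℂ}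
    (hne₁ : ∀ᵐ p ∂H, den m₁ g p ≠ 0) (hne₂ : ∀ᵐ p ∂H, den m₂ g p ≠ 0)
    (hint₁ : Integrable (fun p => (p.1 : ℂ) / den m₁ g p) H)
    (hint₂ : Integrable (fun p => (p.1 : ℂ) / den m₂ g p) H) :
    (∫ p, (p.1 : ℂ) / den m₂ g p ∂H) - ∫ p, (p.1 : ℂ) / den m₁ g p ∂H
      = (m₁ - m₂) * ∫ p, (p.1 * p.2 : ℂ) / (den m₁ g p * den m₂ g p) ∂H := by
  rw [← integral_sub hint₂ hint₁, ← integral_const_mul]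
  refine integral_congr_ae ?_
  filter_upwards [hne₁, hne₂] with p h₁ h₂ using div_den_sub_div_den h₁ h₂

lemma inv_mul_le_avg_inv_sq (a b : ℝ) : (a * b)⁻¹ ≤ ((a ^ 2)⁻¹ + (b ^ 2)⁻¹) / 2 := by
  have := two_mul_le_add_sq a⁻¹ b⁻¹
  rw [inv_pow, inv_pow] at this
  rw [mul_inv]
  linarith

lemma norm_div_den_mul_den_le {m₁ m₂ g : ℂ} {p : ℝ × ℝ} (hp : 0 ≤ p.1 ∧ 0 ≤ p.2) :
    ‖(p.1 * p.2 : ℂ) / (den m₁ g p * den m₂ g p)‖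
      ≤ (p.1 * p.2 / ‖den m₁ g p‖ ^ 2 + p.1 * p.2 / ‖den m₂ g p‖ ^ 2) / 2 := by
  have hst : 0 ≤ p.1 * p.2 := mul_nonneg hp.1 hp.2
  have hnorm : ‖(p.1 * p.2 : ℂ)‖ = p.1 * p.2 := by
    rw [norm_mul, Complex.norm_real, Complex.norm_real, Real.norm_of_nonneg hp.1,
      Real.norm_of_nonneg hp.2]
  calc ‖(p.1 * p.2 : ℂ) / (den m₁ g p * den m₂ g p)‖
      = p.1 * p.2 * (‖den m₁ g p‖ * ‖den m₂ g p‖)⁻¹ := by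
        rw [norm_div, hnorm, norm_mul, div_eq_mul_inv]
    _ ≤ p.1 * p.2 * (((‖den m₁ g p‖ ^ 2)⁻¹ + (‖den m₂ g p‖ ^ 2)⁻¹) / 2) :=
        mul_le_mul_of_nonneg_left (inv_mul_le_avg_inv_sq _ _) hst
    _ = _ := by ring

lemma norm_integral_div_den_mul_den_le {H : Measure (ℝ × ℝ)} {m₁ m₂ g : ℂ}
    (hHsupp : ∀ᵐ p ∂H, 0 ≤ p.1 ∧ 0 ≤ p.2) (hA₁ : IntA2 H m₁ g) (hA₂ : IntA2 H m₂ g) :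
    ‖∫ p, (p.1 * p.2 : ℂ) / (den m₁ g p * den m₂ g p) ∂H‖ ≤ (A2 H m₁ g + A2 H m₂ g) / 2 := by
  calc ‖∫ p, (p.1 * p.2 : ℂ) / (den m₁ g p * den m₂ g p) ∂H‖
      ≤ ∫ p, ‖(p.1 * p.2 : ℂ) / (den m₁ g p * den m₂ g p)‖ ∂H :=
        norm_integral_le_integral_norm _
    _ ≤ ∫ p, (p.1 * p.2 / ‖den m₁ g p‖ ^ 2 + p.1 * p.2 / ‖den m₂ g p‖ ^ 2) / 2 ∂H := by
        refine integral_mono_of_nonneg (Filter.Eventually.of_forall fun _ => norm_nonneg _)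
          ((hA₁.add hA₂).div_const 2) ?_
        filter_upwards [hHsupp] with p hp using norm_div_den_mul_den_le hp
    _ = (A2 H m₁ g + A2 H m₂ g) / 2 := by
        rw [integral_div, integral_add hA₁ hA₂, A2, A2]

theorem stmt12_general (H : Measure (ℝ × ℝ))
    (hHsupp : ∀ᵐ p ∂H, 0 ≤ p.1 ∧ 0 ≤ p.2)
    (c : ℝ) (hc : 0 < c)
    (g : ℂ) (m1 m2 : ℂ)
    (hne1 : ∀ᵐ p ∂H, den m1 g p ≠ 0)
    (hne2 : ∀ᵐ p ∂H, den m2 g p ≠ 0)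
    (hint1 : Integrable (fun p => (p.1 : ℂ) / den m1 g p) H)
    (hint2 : Integrable (fun p => (p.1 : ℂ) / den m2 g p) H)
    (heq1 : c * g ^ 2 * (∫ p, (p.1 : ℂ) / den m1 g p ∂H) + m1 - g = 0)
    (heq2 : c * g ^ 2 * (∫ p, (p.1 : ℂ) / den m2 g p ∂H) + m2 - g = 0)
    (hA1 : IntA2 H m1 g) (hA2 : IntA2 H m2 g)
    (hlt1 : c * A2 H m1 g < (‖g‖ ^ 2)⁻¹)
    (hlt2 : c * A2 H m2 g < (‖g‖ ^ 2)⁻¹) :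
    m1 = m2 := by
  by_contra hne
  set X := ∫ p, (p.1 * p.2 : ℂ) / (den m1 g p * den m2 g p) ∂H
  have hX : (c : ℂ) * g ^ 2 * X = 1 := by
    refine mul_left_cancel₀ (sub_ne_zero.mpr hne) ?_
    linear_combination heq2 - heq1 - (c * g ^ 2 : ℂ) *
      integral_div_den_sub_integral_div_den hne1 hne2 hint1 hint2
  have hnormX : c * ‖g‖ ^ 2 * ‖X‖ = 1 := by
    simpa [norm_mul, abs_of_pos hc] using congrArg (‖·‖) hX
  have hG : 0 < ‖g‖ ^ 2 := by
    refine (sq_nonneg _).lt_of_ne fun h => ?_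
    simp [← h] at hnormX
  refine lt_irrefl (1 : ℝ) ?_
  calc (1 : ℝ) = c * ‖g‖ ^ 2 * ‖X‖ := hnormX.symm
    _ ≤ c * ‖g‖ ^ 2 * ((A2 H m1 g + A2 H m2 g) / 2) :=
        mul_le_mul_of_nonneg_left (norm_integral_div_den_mul_den_le hHsupp hA1 hA2)
          (mul_nonneg hc.le hG.le)
    _ = ‖g‖ ^ 2 * ((c * A2 H m1 g + c * A2 H m2 g) / 2) := by ring
    _ < ‖g‖ ^ 2 * (‖g‖ ^ 2)⁻¹ := by gcongr; linarith
    _ = 1 := mul_inv_cancel₀ hG.ne'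

theorem stmt12 (H : Measure (ℝ × ℝ)) [IsProbabilityMeasure H]
    (hHsupp : ∀ᵐ p ∂H, 0 ≤ p.1 ∧ 0 ≤ p.2)
    (c : ℝ) (hc : 0 < c)
    (g : ℂ) (hg : g ≠ 0) (m1 m2 : ℂ)
    (hne1 : ∀ᵐ p ∂H, den m1 g p ≠ 0)
    (hne2 : ∀ᵐ p ∂H, den m2 g p ≠ 0)
    (hint1 : Integrable (fun p => (p.1 : ℂ) / den m1 g p) H)
    (hint2 : Integrable (fun p => (p.1 : ℂ) / den m2 g p) H)
    (heq1 : c * g ^ 2 * (∫ p, (p.1 : ℂ) / den m1 g p ∂H) + m1 - g = 0)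
    (heq2 : c * g ^ 2 * (∫ p, (p.1 : ℂ) / den m2 g p ∂H) + m2 - g = 0)
    (hA1 : IntA2 H m1 g) (hA2 : IntA2 H m2 g)
    (hlt1 : c * A2 H m1 g < (‖g‖ ^ 2)⁻¹)
    (hlt2 : c * A2 H m2 g < (‖g‖ ^ 2)⁻¹) :
    m1 = m2 :=
  stmt12_general H hHsupp c hc g m1 m2 hne1 hne2 hint1 hint2 heq1 heq2 hA1 hA2 hlt1 hlt2

end
end

section
/- (Tightness and weak convergence via approximating sequences in Lévy distance.) Let {F_n} be a sequence of probability distribution functions on ℝ. Suppose that for each ε > 0 there exists a tight sequence of probability distribution functions {F_{n,ε}}_n, such that for each δ > 0 there is an ε = ε(δ) > 0 with limsup_n L(F_{n,ε(δ)}, F_n) < δ. Then the sequence {F_n} is tight. Moreover, if for each ε > 0 the sequence F_{n,ε} converges weakly to a distribution function F_ε as n → ∞, then F_n converges weakly to some distribution function F, and F_{ε(δ)} converges weakly to F as δ → 0. -/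
/-!
Once `L(F_{n,ε}, F_n) < δ`, the Lévy bound `F_{n,ε}(x - δ) - δ ≤ F_n(x) ≤ F_{n,ε}(x + δ) + δ`
transfers tightness from `F_{n,ε}` to `F_n`. Passing to the limit at continuity points of `F_ε`
gives `F_ε(x - 2δ) - δ ≤ liminf F_n(x) ≤ limsup F_n(x) ≤ F_ε(x + 2δ) + δ`, and letting `δ → 0`
yields `limsup F_n(x) ≤ liminf F_n(y)` for `x < y`. Hence `F_n` converges at every continuity
point of the right-continuous regularisation `G` of `x ↦ limsup F_n(x)`, tightness makes `G` a
distribution function, and the same two bounds squeeze `F_{ε(δ)}` to `G`.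
-/

open MeasureTheory Filter Topology

noncomputable section

/-- A probability distribution function on `ℝ`: monotone, right-continuous, with limits
`0` at `−∞` and `1` at `+∞`. -/
def IsDF (F : ℝ → ℝ) : Prop :=
  Monotone F ∧ (∀ x, ContinuousWithinAt F (Set.Ici x) x) ∧
    Tendsto F atBot (𝓝 0) ∧ Tendsto F atTop (𝓝 1)

/-- The Lévy distance between two distribution functions. -/
def levyDist (F G : ℝ → ℝ) : ℝ :=
  sInf {d : ℝ | 0 < d ∧ ∀ x, G (x - d) - d ≤ F x ∧ F x ≤ G (x + d) + d}

/-- Tightness of a sequence of distribution functions. -/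
def TightSeq (F : ℕ → ℝ → ℝ) : Prop :=
  ∀ θ > 0, ∃ x > 0, ∀ n, 1 - θ < F n x - F n (-x)

/-- Weak convergence of a sequence of distribution functions to a function `G`:
convergence at every continuity point of `G`. -/
def WeakConvSeq (F : ℕ → ℝ → ℝ) (G : ℝ → ℝ) : Prop :=
  ∀ x, ContinuousAt G x → Tendsto (fun n => F n x) atTop (𝓝 (G x))

namespace IsDF

variable {F : ℝ → ℝ}

lemma nonneg (hF : IsDF F) (x : ℝ) : 0 ≤ F x :=
  le_of_tendsto hF.2.2.1 (eventually_atBot.2 ⟨x, fun _ hy => hF.1 hy⟩)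

lemma le_one (hF : IsDF F) (x : ℝ) : F x ≤ 1 :=
  ge_of_tendsto hF.2.2.2 (eventually_atTop.2 ⟨x, fun _ hy => hF.1 hy⟩)

lemma tendsto_sub_neg_atTop (hF : IsDF F) : Tendsto (fun x => F x - F (-x)) atTop (𝓝 1) := by
  simpa using hF.2.2.2.sub (hF.2.2.1.comp tendsto_neg_atTop_atBot)

end IsDF

lemma Monotone.exists_continuousAt_mem_Ioo {f : ℝ → ℝ} (hf : Monotone f) {a b : ℝ} (hab : a < b) :
    ∃ c ∈ Set.Ioo a b, ContinuousAt f c := by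
  obtain ⟨c, hc, hac, hcb⟩ :=
    (hf.countable_not_continuousAt.dense_compl ℝ).exists_between hab
  exact ⟨c, ⟨hac, hcb⟩, not_not.1 hc⟩

/-- `levyDist F G` is the infimum of the positive `d` with `LevyBound d F G`. -/
def LevyBound (d : ℝ) (F G : ℝ → ℝ) : Prop :=
  ∀ x, G (x - d) - d ≤ F x ∧ F x ≤ G (x + d) + d

namespace LevyBound

variable {d : ℝ} {F G : ℝ → ℝ}

lemma symm (h : LevyBound d F G) : LevyBound d G F := by
  intro x
  have hl := (h (x - d)).2
  have hr := (h (x + d)).1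
  rw [sub_add_cancel] at hl
  rw [add_sub_cancel_right] at hr
  constructor <;> linarith

lemma mono (h : LevyBound d F G) (hG : Monotone G) {d' : ℝ} (hdd' : d ≤ d') :
    LevyBound d' F G := fun x =>
  ⟨by linarith [(h x).1, hG (show x - d' ≤ x - d by linarith)],
    by linarith [(h x).2, hG (show x + d ≤ x + d' by linarith)]⟩

lemma of_isDF (hF : IsDF F) (hG : IsDF G) : LevyBound 2 F G := fun x =>
  ⟨by linarith [hG.le_one (x - 2), hF.nonneg x], by linarith [hG.nonneg (x + 2), hF.le_one x]⟩

end LevyBound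

section LevyDist

variable {F G : ℝ → ℝ}

lemma levyDist_le_two (hF : IsDF F) (hG : IsDF G) : levyDist F G ≤ 2 :=
  csInf_le ⟨0, fun _ hd => hd.1.le⟩ ⟨two_pos, LevyBound.of_isDF hF hG⟩

lemma levyBound_of_levyDist_lt (hF : IsDF F) (hG : IsDF G) {d : ℝ} (hd : levyDist F G < d) :
    LevyBound d F G := by
  obtain ⟨d', ⟨-, hd'⟩, hd'd⟩ :=
    exists_lt_of_csInf_lt (s := {d | 0 < d ∧ LevyBound d F G}) ⟨2, two_pos, LevyBound.of_isDF hF hG⟩ hd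
  exact LevyBound.mono hd' hG.1 hd'd.le

lemma eventually_levyBound_of_limsup_levyDist_lt {F G : ℕ → ℝ → ℝ} (hF : ∀ n, IsDF (F n))
    (hG : ∀ n, IsDF (G n)) {d : ℝ} (hd : limsup (fun n => levyDist (G n) (F n)) atTop < d) :
    ∀ᶠ n in atTop, LevyBound d (F n) (G n) := by
  have hbdd : IsBoundedUnder (· ≤ ·) atTop (fun n => levyDist (G n) (F n)) :=
    isBoundedUnder_of ⟨2, fun n => levyDist_le_two (hG n) (hF n)⟩
  filter_upwards [eventually_lt_of_limsup_lt hd hbdd] with n hn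
  exact (levyBound_of_levyDist_lt (hG n) (hF n) hn).symm

end LevyDist

section Tightness

variable {F : ℕ → ℝ → ℝ}

-- Each single distribution function is tight, so finitely many indices can be ignored.
lemma tightSeq_of_eventually (hF : ∀ n, IsDF (F n))
    (h : ∀ θ > 0, ∃ x, ∀ᶠ n in atTop, 1 - θ < F n x - F n (-x)) : TightSeq F := by
  intro θ hθ
  obtain ⟨x₀, hx₀⟩ := h θ hθ
  obtain ⟨N, hN⟩ := eventually_atTop.1 hx₀
  have hinit : ∀ᶠ x in atTop, ∀ n ∈ Finset.range N, 1 - θ < F n x - F n (-x) :=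
    (eventually_all_finset _).2 fun n _ =>
      (hF n).tendsto_sub_neg_atTop.eventually (eventually_gt_nhds (by linarith))
  obtain ⟨x, hx, hxx₀, hxpos⟩ :=
    (hinit.and ((eventually_ge_atTop x₀).and (eventually_gt_atTop 0))).exists
  refine ⟨x, hxpos, fun n => ?_⟩
  rcases lt_or_ge n N with hn | hn
  · exact hx n (Finset.mem_range.2 hn)
  · linarith [hN n hn, (hF n).1 hxx₀, (hF n).1 (neg_le_neg hxx₀)]

lemma tightSeq_of_levyBound (hF : ∀ n, IsDF (F n))
    (happrox : ∀ δ > 0, ∃ G : ℕ → ℝ → ℝ, (∀ n, Monotone (G n)) ∧ TightSeq G ∧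
      ∀ᶠ n in atTop, LevyBound δ (F n) (G n)) : TightSeq F := by
  refine tightSeq_of_eventually hF fun θ hθ => ?_
  obtain ⟨G, hG, hGtight, hbound⟩ := happrox (θ / 4) (by positivity)
  obtain ⟨x, -, hx⟩ := hGtight (θ / 2) (by positivity)
  refine ⟨x + θ / 4, ?_⟩
  filter_upwards [hbound] with n hn
  have hright : G n x - θ / 4 ≤ F n (x + θ / 4) := by
    simpa using (hn (x + θ / 4)).1
  have hleft : F n (-(x + θ / 4)) ≤ G n (-x) + θ / 4 := by
    simpa [neg_add_cancel_right] using (hn (-(x + θ / 4))).2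
  linarith [hx n]

end Tightness

def upperLim (F : ℕ → ℝ → ℝ) (x : ℝ) : ℝ := limsup (fun n => F n x) atTop

def lowerLim (F : ℕ → ℝ → ℝ) (x : ℝ) : ℝ := liminf (fun n => F n x) atTop

section PointwiseLimits

variable {F : ℕ → ℝ → ℝ}

lemma isBoundedUnder_le_apply (hF : ∀ n, IsDF (F n)) (x : ℝ) :
    IsBoundedUnder (· ≤ ·) atTop (fun n => F n x) :=
  isBoundedUnder_of ⟨1, fun n => (hF n).le_one x⟩

lemma isBoundedUnder_ge_apply (hF : ∀ n, IsDF (F n)) (x : ℝ) :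
    IsBoundedUnder (· ≥ ·) atTop (fun n => F n x) :=
  isBoundedUnder_of ⟨0, fun n => (hF n).nonneg x⟩

lemma upperLim_mono (hF : ∀ n, IsDF (F n)) : Monotone (upperLim F) := fun x y hxy =>
  limsup_le_limsup (Eventually.of_forall fun n => (hF n).1 hxy)
    (isBoundedUnder_ge_apply hF x).isCoboundedUnder_le (isBoundedUnder_le_apply hF y)

lemma lowerLim_le_upperLim (hF : ∀ n, IsDF (F n)) (x : ℝ) : lowerLim F x ≤ upperLim F x :=
  liminf_le_limsup (isBoundedUnder_le_apply hF x) (isBoundedUnder_ge_apply hF x)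

lemma tendsto_upperLim_atBot (hF : ∀ n, IsDF (F n)) (htight : TightSeq F) :
    Tendsto (upperLim F) atBot (𝓝 0) := by
  refine tendsto_order.2 ⟨fun a ha => Eventually.of_forall fun y => ha.trans_le ?_,
    fun c hc => ?_⟩
  · exact le_limsup_of_frequently_le (Frequently.of_forall fun n => (hF n).nonneg y)
      (isBoundedUnder_le_apply hF y)
  · obtain ⟨x, -, hx⟩ := htight (c / 2) (by linarith)
    have hsmall : upperLim F (-x) ≤ c / 2 :=
      limsup_le_of_le (isBoundedUnder_ge_apply hF _).isCoboundedUnder_le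
        (Eventually.of_forall fun n => by linarith [hx n, (hF n).le_one x])
    filter_upwards [eventually_le_atBot (-x)] with y hy
    linarith [upperLim_mono hF hy]

lemma tendsto_upperLim_atTop (hF : ∀ n, IsDF (F n)) (htight : TightSeq F) :
    Tendsto (upperLim F) atTop (𝓝 1) := by
  refine tendsto_order.2 ⟨fun a ha => ?_, fun c hc => Eventually.of_forall fun y => ?_⟩
  · obtain ⟨x, -, hx⟩ := htight ((1 - a) / 2) (by linarith)
    have hlarge : 1 - (1 - a) / 2 ≤ lowerLim F x :=
      le_liminf_of_le (isBoundedUnder_le_apply hF _).isCoboundedUnder_ge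
        (Eventually.of_forall fun n => by linarith [hx n, (hF n).nonneg (-x)])
    filter_upwards [eventually_ge_atTop x] with y hy
    linarith [lowerLim_le_upperLim hF x, upperLim_mono hF hy]
  · exact lt_of_le_of_lt (limsup_le_of_le (isBoundedUnder_ge_apply hF y).isCoboundedUnder_le
      (Eventually.of_forall fun n => (hF n).le_one y)) hc

lemma isDF_rightLim_upperLim (hF : ∀ n, IsDF (F n)) (htight : TightSeq F) :
    IsDF (Function.rightLim (upperLim F)) :=
  ⟨(upperLim_mono hF).rightLim, (upperLim_mono hF).stieltjesFunction.right_continuous,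
    tendsto_rightLim_atBot_of_tendsto (tendsto_upperLim_atBot hF htight),
    tendsto_rightLim_atTop_of_tendsto (tendsto_upperLim_atTop hF htight)⟩

lemma weakConvSeq_rightLim_upperLim (hF : ∀ n, IsDF (F n))
    (hul : ∀ x y, x < y → upperLim F x ≤ lowerLim F y) :
    WeakConvSeq F (Function.rightLim (upperLim F)) := by
  intro x hx
  have hupper : upperLim F x ≤ Function.rightLim (upperLim F) x :=
    (upperLim_mono hF).le_rightLim le_rfl
  have hlower : Function.rightLim (upperLim F) x ≤ lowerLim F x := by
    refine le_of_tendsto (hx.tendsto.mono_left (nhdsWithin_le_nhds (s := Set.Iio x))) ?_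
    filter_upwards [self_mem_nhdsWithin] with w (hw : w < x)
    obtain ⟨z, hwz, hzx⟩ := exists_between hw
    exact ((upperLim_mono hF).rightLim_le hwz).trans (hul z x hzx)
  exact tendsto_of_le_liminf_of_limsup_le hlower hupper
    (isBoundedUnder_le_apply hF x) (isBoundedUnder_ge_apply hF x)

variable {G : ℕ → ℝ → ℝ} {H : ℝ → ℝ} {δ : ℝ}

lemma upperLim_le_of_levyBound (hF : ∀ n, IsDF (F n)) (hG : ∀ n, Monotone (G n))
    (hH : Monotone H) (hGH : WeakConvSeq G H) (hδ : 0 < δ)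
    (hbound : ∀ᶠ n in atTop, LevyBound δ (F n) (G n)) (x : ℝ) :
    upperLim F x ≤ H (x + 2 * δ) + δ := by
  obtain ⟨c, hc, hHc⟩ := hH.exists_continuousAt_mem_Ioo (by linarith : x + δ < x + 2 * δ)
  have hconv : Tendsto (fun n => G n c + δ) atTop (𝓝 (H c + δ)) := (hGH c hHc).add_const δ
  have hle : ∀ᶠ n in atTop, F n x ≤ G n c + δ := by
    filter_upwards [hbound] with n hn
    linarith [(hn x).2, hG n hc.1.le]
  calc upperLim F x ≤ limsup (fun n => G n c + δ) atTop :=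
        limsup_le_limsup hle (isBoundedUnder_ge_apply hF x).isCoboundedUnder_le
          hconv.isBoundedUnder_le
    _ = H c + δ := hconv.limsup_eq
    _ ≤ H (x + 2 * δ) + δ := by linarith [hH hc.2.le]

lemma le_lowerLim_of_levyBound (hF : ∀ n, IsDF (F n)) (hG : ∀ n, Monotone (G n))
    (hH : Monotone H) (hGH : WeakConvSeq G H) (hδ : 0 < δ)
    (hbound : ∀ᶠ n in atTop, LevyBound δ (F n) (G n)) (x : ℝ) :
    H (x - 2 * δ) - δ ≤ lowerLim F x := by
  obtain ⟨c, hc, hHc⟩ := hH.exists_continuousAt_mem_Ioo (by linarith : x - 2 * δ < x - δ)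
  have hconv : Tendsto (fun n => G n c - δ) atTop (𝓝 (H c - δ)) := (hGH c hHc).sub_const δ
  have hle : ∀ᶠ n in atTop, G n c - δ ≤ F n x := by
    filter_upwards [hbound] with n hn
    linarith [(hn x).1, hG n hc.2.le]
  calc H (x - 2 * δ) - δ ≤ H c - δ := by linarith [hH hc.1.le]
    _ = liminf (fun n => G n c - δ) atTop := hconv.liminf_eq.symm
    _ ≤ lowerLim F x :=
        liminf_le_liminf hle hconv.isBoundedUnder_ge
          (isBoundedUnder_le_apply hF x).isCoboundedUnder_ge

lemma upperLim_le_lowerLim_of_approx {H : ℝ → ℝ → ℝ} (hH : ∀ δ > 0, Monotone (H δ))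
    (hup : ∀ δ > 0, ∀ x, upperLim F x ≤ H δ (x + 2 * δ) + δ)
    (hlow : ∀ δ > 0, ∀ x, H δ (x - 2 * δ) - δ ≤ lowerLim F x) {x y : ℝ} (hxy : x < y) :
    upperLim F x ≤ lowerLim F y := by
  refine le_of_forall_pos_le_add fun t ht => ?_
  set δ := min ((y - x) / 4) (t / 2)
  have hδ : 0 < δ := lt_min (by linarith) (by linarith)
  have hδy : x + 2 * δ ≤ y - 2 * δ := by linarith [min_le_left ((y - x) / 4) (t / 2)]
  have hδt : 2 * δ ≤ t := by linarith [min_le_right ((y - x) / 4) (t / 2)]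
  linarith [hup δ hδ x, hlow δ hδ y, hH δ hδ hδy]

end PointwiseLimits

lemma tendsto_nhdsGT_zero_of_sandwich {Φ K : ℝ → ℝ} {x : ℝ} (hΦ : ContinuousAt Φ x) (c : ℝ)
    (hK : ∀ δ > 0, Φ (x - c * δ) - δ ≤ K δ ∧ K δ ≤ Φ (x + c * δ) + δ) :
    Tendsto K (𝓝[>] 0) (𝓝 (Φ x)) := by
  have hshift : ∀ s : ℝ, Tendsto (fun δ : ℝ => Φ (x + s * δ) + δ) (𝓝[>] 0) (𝓝 (Φ x)) := by
    intro s
    have hlin : Tendsto (fun δ : ℝ => x + s * δ) (𝓝 0) (𝓝 x) := by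
      simpa using ((continuous_const_mul s).const_add x).tendsto 0
    simpa using ((hΦ.tendsto.comp hlin).add tendsto_id).mono_left nhdsWithin_le_nhds
  have hlower : Tendsto (fun δ : ℝ => Φ (x - c * δ) - δ) (𝓝[>] 0) (𝓝 (Φ x)) := by
    have := ((hshift (-c)).sub (tendsto_id.mono_left nhdsWithin_le_nhds)).sub
      (tendsto_id.mono_left nhdsWithin_le_nhds)
    simpa [sub_eq_add_neg, add_assoc] using this
  refine tendsto_of_tendsto_of_tendsto_of_le_of_le' hlower (hshift c) ?_ ?_ <;>
    filter_upwards [self_mem_nhdsWithin] with δ hδ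
  exacts [(hK δ hδ).1, (hK δ hδ).2]

theorem stmt15 (F : ℕ → ℝ → ℝ) (hF : ∀ n, IsDF (F n))
    (Fa : ℝ → ℕ → ℝ → ℝ)
    (hFa : ∀ ε > (0 : ℝ), (∀ n, IsDF (Fa ε n)) ∧ TightSeq (Fa ε))
    (ε : ℝ → ℝ)
    (hε : ∀ δ > (0 : ℝ), 0 < ε δ ∧
      Filter.limsup (fun n => levyDist (Fa (ε δ) n) (F n)) atTop < δ) :
    TightSeq F ∧
      ∀ Flim : ℝ → ℝ → ℝ,
        (∀ e > (0 : ℝ), IsDF (Flim e) ∧ WeakConvSeq (Fa e) (Flim e)) →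
        ∃ G : ℝ → ℝ, IsDF G ∧ WeakConvSeq F G ∧
          ∀ x, ContinuousAt G x →
            Tendsto (fun δ => Flim (ε δ) x) (𝓝[>] (0 : ℝ)) (𝓝 (G x)) := by
  have hFa_mono : ∀ δ > 0, ∀ n, Monotone (Fa (ε δ) n) := fun δ hδ n =>
    ((hFa _ (hε δ hδ).1).1 n).1
  have hbound : ∀ δ > 0, ∀ᶠ n in atTop, LevyBound δ (F n) (Fa (ε δ) n) := fun δ hδ =>
    eventually_levyBound_of_limsup_levyDist_lt hF (hFa _ (hε δ hδ).1).1 (hε δ hδ).2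
  have htight : TightSeq F := tightSeq_of_levyBound hF fun δ hδ =>
    ⟨Fa (ε δ), hFa_mono δ hδ, (hFa _ (hε δ hδ).1).2, hbound δ hδ⟩
  refine ⟨htight, fun Flim hFlim => ?_⟩
  have hFlim_mono : ∀ δ > 0, Monotone (Flim (ε δ)) := fun δ hδ => (hFlim _ (hε δ hδ).1).1.1
  have hup : ∀ δ > 0, ∀ x, upperLim F x ≤ Flim (ε δ) (x + 2 * δ) + δ := fun δ hδ =>
    upperLim_le_of_levyBound hF (hFa_mono δ hδ) (hFlim_mono δ hδ) (hFlim _ (hε δ hδ).1).2 hδ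
      (hbound δ hδ)
  have hlow : ∀ δ > 0, ∀ x, Flim (ε δ) (x - 2 * δ) - δ ≤ lowerLim F x := fun δ hδ =>
    le_lowerLim_of_levyBound hF (hFa_mono δ hδ) (hFlim_mono δ hδ) (hFlim _ (hε δ hδ).1).2 hδ
      (hbound δ hδ)
  have hu := upperLim_mono hF
  refine ⟨Function.rightLim (upperLim F), isDF_rightLim_upperLim hF htight,
    weakConvSeq_rightLim_upperLim hF fun x y =>
      upperLim_le_lowerLim_of_approx hFlim_mono hup hlow,
    fun x hx => tendsto_nhdsGT_zero_of_sandwich hx 3 fun δ (hδ : 0 < δ) => ⟨?_, ?_⟩⟩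
  · have := hup δ hδ (x - 2 * δ)
    rw [sub_add_cancel] at this
    linarith [hu.rightLim_le (show x - 3 * δ < x - 2 * δ by linarith)]
  · have := hlow δ hδ (x + 2 * δ)
    rw [add_sub_cancel_right] at this
    linarith [lowerLim_le_upperLim hF (x + 2 * δ),
      hu.le_rightLim (show x + 2 * δ ≤ x + 3 * δ by linarith)]
end
end

section
/- (Almost sure convergence of the truncated second moments.) For each n let N = N(n) with n/N → c > 0 as n → ∞, and let {x_{ij}^{(n)} : 1 ≤ i ≤ n, 1 ≤ j ≤ N} be, for each n, independent complex random variables with mean 0 and E|x_{ij}^{(n)}|² = 1. Let η_n > 0 be a sequence with η_n → 0, η_n·√n → ∞, and (1/(n·N·η_n²))·Σ_{i,j} E(|x_{ij}^{(n)}|²·1{|x_{ij}^{(n)}| ≥ η_n·√n}) → 0 as n → ∞. Then, almost surely, (n·N)⁻¹·Σ_{i≤n, j≤N} |x_{ij}^{(n)}|²·1{|x_{ij}^{(n)}| < η_n·√n} → 1 as n → ∞. -/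
/-!
Write `Y = ‖x‖² 1{‖x‖ < η √n}` for the truncated squares. Since `Y` and the tail
`‖x‖² 1{‖x‖ ≥ η √n}` add up to `‖x‖²`, whose mean is `1`, the average of the means `E Y` equals
`1 - η² L`, where `L` is the Lindeberg ratio; it therefore tends to `1`.

The centred variables `Y - E Y` are independent, bounded by `b = η² n ≤ n` and have variance at
most `b E Y ≤ b`, so the fourth moment of their sum over the `nN` entries is at most
`6 (nN b)² + nN b³`. Markov's inequality for the fourth power bounds the probability that their
average exceeds `ε` by `7 / (ε⁴ N²)`, which is summable because `N` grows like `n / c`, and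
Borel–Cantelli makes the centred average tend to `0` almost surely.
-/

open MeasureTheory Complex Filter Topology ProbabilityTheory

noncomputable section

lemma abs_sum_le_card_mul {ι : Type*} {s : Finset ι} {f : ι → ℝ} {C : ℝ} (h : ∀ i, |f i| ≤ C) :
    |∑ i ∈ s, f i| ≤ s.card * C :=
  (Finset.abs_sum_le_sum_abs _ _).trans <|
    (Finset.sum_le_card_nsmul _ _ _ fun i _ => h i).trans_eq (nsmul_eq_mul _ _)

section FiniteMeasure

variable {Ω : Type*} [MeasurableSpace Ω] {P : Measure Ω} [IsFiniteMeasure P]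

lemma integrable_of_abs_le {f : Ω → ℝ} {C : ℝ} (hf : Measurable f) (hC : ∀ ω, |f ω| ≤ C) :
    Integrable f P :=
  .of_bound hf.aestronglyMeasurable C (ae_of_all _ hC)

lemma integrable_pow_of_abs_le {f : Ω → ℝ} {C : ℝ} (hf : Measurable f) (hC : ∀ ω, |f ω| ≤ C)
    (p : ℕ) : Integrable (fun ω => f ω ^ p) P :=
  integrable_of_abs_le (hf.pow_const p) (C := C ^ p) fun ω => by
    rw [abs_pow]; exact pow_le_pow_left₀ (abs_nonneg _) (hC ω) p

lemma integrable_pow_mul_pow_of_abs_le {f g : Ω → ℝ} {C D : ℝ} (hf : Measurable f)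
    (hg : Measurable g) (hfC : ∀ ω, |f ω| ≤ C) (hgD : ∀ ω, |g ω| ≤ D) (p q : ℕ) :
    Integrable (fun ω => f ω ^ p * g ω ^ q) P := by
  refine integrable_of_abs_le ((hf.pow_const p).mul (hg.pow_const q)) (C := C ^ p * D ^ q)
    fun ω => ?_
  have hC : 0 ≤ C := (abs_nonneg _).trans (hfC ω)
  rw [abs_mul, abs_pow, abs_pow]
  gcongr
  exacts [hfC ω, hgD ω]

lemma measureReal_abs_ge_le_integral_pow_div {T : Ω → ℝ} {ε : ℝ} (hε : 0 < ε) (p : ℕ)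
    (hT : Integrable (fun ω => |T ω| ^ p) P) :
    P.real {ω | ε ≤ |T ω|} ≤ (∫ ω, |T ω| ^ p ∂P) / ε ^ p := by
  rw [le_div_iff₀ (by positivity), mul_comm]
  refine le_trans ?_
    (mul_meas_ge_le_integral_of_nonneg (ae_of_all _ fun ω => by positivity) hT (ε ^ p))
  exact mul_le_mul_of_nonneg_left
    (measureReal_mono fun ω (hω : ε ≤ |T ω|) => pow_le_pow_left₀ hε.le hω p) (by positivity)

lemma ae_tendsto_zero_of_summable_measureReal {T : ℕ → Ω → ℝ}
    (h : ∀ ε > 0, Summable fun n => P.real {ω | ε ≤ |T n ω|}) :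
    ∀ᵐ ω ∂P, Tendsto (fun n => T n ω) atTop (𝓝 0) := by
  have hk (k : ℕ) : ∀ᵐ ω ∂P, ∀ᶠ n in atTop, |T n ω| < 1 / (k + 1) := by
    have hsum := (h (1 / (k + 1)) (by positivity)).tsum_ofReal_ne_top
    simp only [measureReal_def, ENNReal.ofReal_toReal (measure_ne_top P _)] at hsum
    filter_upwards [ae_eventually_notMem hsum] with ω hω
    filter_upwards [hω] with n hn using not_le.1 hn
  filter_upwards [ae_all_iff.2 hk] with ω hω
  refine Metric.tendsto_nhds.2 fun ε hε => ?_
  obtain ⟨k, hk⟩ := exists_nat_one_div_lt hε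
  filter_upwards [hω k] with n hn
  rw [Real.dist_0_eq_abs]
  exact hn.trans hk

end FiniteMeasure

section IndependentSums

variable {Ω ι : Type*} [MeasurableSpace Ω] {P : Measure Ω} [IsProbabilityMeasure P]
  {Z : ι → Ω → ℝ} {C : ℝ}

lemma integral_sq_sum_of_iIndepFun (hmeas : ∀ i, Measurable (Z i)) (hind : iIndepFun Z P)
    (hmean : ∀ i, ∫ ω, Z i ω ∂P = 0) (hC : ∀ i ω, |Z i ω| ≤ C) (s : Finset ι) :
    ∫ ω, (∑ i ∈ s, Z i ω) ^ 2 ∂P = ∑ i ∈ s, ∫ ω, Z i ω ^ 2 ∂P := by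
  have hL2 : ∀ i, MemLp (Z i) 2 P := fun i =>
    .of_bound (hmeas i).aestronglyMeasurable C (ae_of_all _ (hC i))
  have hsum := IndepFun.variance_sum (s := s) (fun i _ => hL2 i)
    fun i _ j _ hij => hind.indepFun hij
  rw [Finset.sum_fn] at hsum
  have hsum_mean : ∫ ω, ∑ i ∈ s, Z i ω ∂P = 0 := by
    rw [integral_finsetSum s fun i _ => (hL2 i).integrable one_le_two]
    exact Finset.sum_eq_zero fun i _ => hmean i
  rw [variance_of_integral_eq_zero (Finset.measurable_sum s fun i _ => hmeas i).aemeasurable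
    hsum_mean] at hsum
  rw [hsum]
  exact Finset.sum_congr rfl fun i _ =>
    variance_of_integral_eq_zero (hmeas i).aemeasurable (hmean i)

lemma integral_pow_four_sum_le_of_iIndepFun (hmeas : ∀ i, Measurable (Z i))
    (hind : iIndepFun Z P) (hmean : ∀ i, ∫ ω, Z i ω ∂P = 0) (hC : ∀ i ω, |Z i ω| ≤ C)
    (s : Finset ι) :
    ∫ ω, (∑ i ∈ s, Z i ω) ^ 4 ∂P ≤
      6 * (∑ i ∈ s, ∫ ω, Z i ω ^ 2 ∂P) ^ 2 + ∑ i ∈ s, ∫ ω, Z i ω ^ 4 ∂P := by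
  classical
  induction s using Finset.induction_on with
  | empty => simp
  | @insert k s hk ih =>
    set S : Ω → ℝ := fun ω => ∑ i ∈ s, Z i ω
    have hS : Measurable S := Finset.measurable_sum s fun i _ => hmeas i
    have hindep : IndepFun S (Z k) P := by
      simpa only [S, Finset.sum_fn] using hind.indepFun_finsetSum_of_notMem hmeas hk
    have hmul (p q : ℕ) :
        ∫ ω, S ω ^ p * Z k ω ^ q ∂P = (∫ ω, S ω ^ p ∂P) * ∫ ω, Z k ω ^ q ∂P :=
      (hindep.comp (measurable_id.pow_const p) (measurable_id.pow_const q)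
        ).integral_fun_mul_eq_mul_integral (hS.pow_const p).aestronglyMeasurable
          ((hmeas k).pow_const q).aestronglyMeasurable
    have hint (p q : ℕ) : Integrable (fun ω => S ω ^ p * Z k ω ^ q) P :=
      integrable_pow_mul_pow_of_abs_le hS (hmeas k) (fun ω => abs_sum_le_card_mul (hC · ω))
        (hC k) p q
    have hS_mean : ∫ ω, S ω ∂P = 0 := by
      rw [integral_finsetSum s fun i _ => integrable_of_abs_le (hmeas i) (hC i)]
      exact Finset.sum_eq_zero fun i _ => hmean i
    -- binomial expansion; the odd cross terms vanish since both factors are centred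
    have hexpand : ∫ ω, (∑ i ∈ insert k s, Z i ω) ^ 4 ∂P =
        ∫ ω, S ω ^ 4 ∂P + 6 * ((∫ ω, S ω ^ 2 ∂P) * ∫ ω, Z k ω ^ 2 ∂P) + ∫ ω, Z k ω ^ 4 ∂P := by
      simp_rw [Finset.sum_insert hk, add_comm (Z k _), add_pow]
      rw [integral_finsetSum _ fun m _ => (hint m (4 - m)).mul_const _]
      simp_rw [integral_mul_const, hmul]
      simp [Finset.sum_range_succ, hmean k, hS_mean, Nat.choose]
      ring
    have hS2 : ∫ ω, S ω ^ 2 ∂P = ∑ i ∈ s, ∫ ω, Z i ω ^ 2 ∂P :=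
      integral_sq_sum_of_iIndepFun hmeas hind hmean hC s
    have hV : 0 ≤ ∑ i ∈ s, ∫ ω, Z i ω ^ 2 ∂P :=
      Finset.sum_nonneg fun i _ => integral_nonneg fun ω => sq_nonneg _
    have hq : 0 ≤ ∫ ω, Z k ω ^ 2 ∂P := integral_nonneg fun ω => sq_nonneg _
    rw [hexpand, hS2, Finset.sum_insert hk, Finset.sum_insert hk]
    nlinarith [ih]

lemma abs_sub_integral_le {Y : Ω → ℝ} {b : ℝ} (hY : Measurable Y) (hnonneg : ∀ ω, 0 ≤ Y ω)
    (hle : ∀ ω, Y ω ≤ b) (ω : Ω) : |Y ω - ∫ ω', Y ω' ∂P| ≤ b := by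
  have h0 : 0 ≤ ∫ ω', Y ω' ∂P := integral_nonneg hnonneg
  have h1 : ∫ ω', Y ω' ∂P ≤ b := by
    simpa using integral_mono (integrable_of_abs_le (P := P) hY fun ω =>
      (abs_of_nonneg (hnonneg ω)).trans_le (hle ω)) (integrable_const b) hle
  exact abs_sub_le_iff.2 ⟨by linarith [hle ω], by linarith [hnonneg ω]⟩

lemma integral_sub_integral_sq_le {Y : Ω → ℝ} {b : ℝ} (hY : Measurable Y)
    (hnonneg : ∀ ω, 0 ≤ Y ω) (hle : ∀ ω, Y ω ≤ b) (hmean : ∫ ω, Y ω ∂P ≤ 1) :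
    ∫ ω, (Y ω - ∫ ω', Y ω' ∂P) ^ 2 ∂P ≤ b := by
  obtain ⟨ω₀⟩ := nonempty_of_isProbabilityMeasure P
  have hYb (ω : Ω) : |Y ω| ≤ b := (abs_of_nonneg (hnonneg ω)).trans_le (hle ω)
  calc ∫ ω, (Y ω - ∫ ω', Y ω' ∂P) ^ 2 ∂P = variance Y P :=
        (variance_eq_integral hY.aemeasurable).symm
    _ ≤ ∫ ω, Y ω ^ 2 ∂P := variance_le_expectation_sq hY.aestronglyMeasurable
    _ ≤ ∫ ω, b * Y ω ∂P := by
      refine integral_mono (integrable_pow_of_abs_le hY hYb 2)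
        ((integrable_of_abs_le hY hYb).const_mul b) fun ω => ?_
      simpa [sq] using mul_le_mul_of_nonneg_right (hle ω) (hnonneg ω)
    _ ≤ b := by
      rw [integral_const_mul]
      exact mul_le_of_le_one_right ((hnonneg ω₀).trans (hle ω₀)) hmean

lemma integral_sub_integral_pow_four_le {Y : Ω → ℝ} {b : ℝ} (hY : Measurable Y)
    (hnonneg : ∀ ω, 0 ≤ Y ω) (hle : ∀ ω, Y ω ≤ b) (hmean : ∫ ω, Y ω ∂P ≤ 1) :
    ∫ ω, (Y ω - ∫ ω', Y ω' ∂P) ^ 4 ∂P ≤ b ^ 3 := by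
  have hZ := abs_sub_integral_le (P := P) hY hnonneg hle
  have hZmeas : Measurable fun ω => Y ω - ∫ ω', Y ω' ∂P := hY.sub_const _
  calc ∫ ω, (Y ω - ∫ ω', Y ω' ∂P) ^ 4 ∂P
      ≤ ∫ ω, b ^ 2 * (Y ω - ∫ ω', Y ω' ∂P) ^ 2 ∂P := by
        refine integral_mono (integrable_pow_of_abs_le hZmeas hZ 4)
          ((integrable_pow_of_abs_le hZmeas hZ 2).const_mul _) fun ω => ?_
        have : (Y ω - ∫ ω', Y ω' ∂P) ^ 2 ≤ b ^ 2 := by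
          rw [← sq_abs]; exact pow_le_pow_left₀ (abs_nonneg _) (hZ ω) 2
        nlinarith [sq_nonneg (Y ω - ∫ ω', Y ω' ∂P)]
    _ ≤ b ^ 3 := by
      rw [integral_const_mul]
      nlinarith [integral_sub_integral_sq_le hY hnonneg hle hmean, sq_nonneg b]

lemma integral_pow_four_sum_sub_integral_le {s : Finset ι} {Y : ι → Ω → ℝ} {b : ℝ}
    (hmeas : ∀ i, Measurable (Y i)) (hind : iIndepFun Y P) (hnonneg : ∀ i ω, 0 ≤ Y i ω)
    (hle : ∀ i ω, Y i ω ≤ b) (hmean : ∀ i, ∫ ω, Y i ω ∂P ≤ 1) :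
    ∫ ω, (∑ i ∈ s, (Y i ω - ∫ ω', Y i ω' ∂P)) ^ 4 ∂P ≤ 6 * (s.card * b) ^ 2 + s.card * b ^ 3 := by
  have h2 := Finset.sum_le_card_nsmul s _ _ fun i _ =>
    integral_sub_integral_sq_le (hmeas i) (hnonneg i) (hle i) (hmean i)
  have h4 := Finset.sum_le_card_nsmul s _ _ fun i _ =>
    integral_sub_integral_pow_four_le (hmeas i) (hnonneg i) (hle i) (hmean i)
  rw [nsmul_eq_mul] at h2 h4
  refine (integral_pow_four_sum_le_of_iIndepFun (fun i => (hmeas i).sub_const _)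
    (hind.comp (fun i y => y - ∫ ω', Y i ω' ∂P) fun i => measurable_id.sub_const _)
    (fun i => ?_) (fun i => abs_sub_integral_le (hmeas i) (hnonneg i) (hle i)) s).trans ?_
  · rw [integral_sub ?_ (integrable_const _), integral_const, smul_eq_mul, probReal_univ, one_mul,
      sub_self]
    exact integrable_of_abs_le (hmeas i) fun ω => (abs_of_nonneg (hnonneg i ω)).trans_le (hle i ω)
  · gcongr

lemma measureReal_abs_average_sub_integral_ge_le [Fintype ι] {Y : ι → Ω → ℝ} {b ε : ℝ}
    (hmeas : ∀ i, Measurable (Y i)) (hind : iIndepFun Y P) (hnonneg : ∀ i ω, 0 ≤ Y i ω)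
    (hle : ∀ i ω, Y i ω ≤ b) (hmean : ∀ i, ∫ ω, Y i ω ∂P ≤ 1) (hε : 0 < ε) :
    P.real {ω | ε ≤ |(Fintype.card ι : ℝ)⁻¹ * ∑ i, (Y i ω - ∫ ω', Y i ω' ∂P)|} ≤
      (6 * (b / Fintype.card ι) ^ 2 + (b / Fintype.card ι) ^ 3) / ε ^ 4 := by
  rcases (Fintype.card ι).eq_zero_or_pos with hcard | hcard
  · simp [hcard, hε.not_ge]
  set M : ℝ := ((Fintype.card ι : ℕ) : ℝ)
  have hM : 0 < M := Nat.cast_pos.2 hcard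
  set S : Ω → ℝ := fun ω => ∑ i, (Y i ω - ∫ ω', Y i ω' ∂P)
  have hint : Integrable (fun ω => |M⁻¹ * S ω| ^ 4) P := by
    refine integrable_pow_of_abs_le ((Finset.measurable_sum _ fun i _ =>
      (hmeas i).sub_const _).const_mul _ |>.abs) (C := b) (fun ω => ?_) 4
    rw [abs_abs, abs_mul, abs_of_pos (inv_pos.2 hM), inv_mul_le_iff₀ hM]
    simpa using abs_sum_le_card_mul (s := Finset.univ)
      fun i => abs_sub_integral_le (P := P) (hmeas i) (hnonneg i) (hle i) ω
  have hpow (ω : Ω) : |M⁻¹ * S ω| ^ 4 = S ω ^ 4 / M ^ 4 := by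
    rw [Even.pow_abs ⟨2, rfl⟩, mul_pow, inv_pow, inv_mul_eq_div]
  calc P.real {ω | ε ≤ |M⁻¹ * S ω|}
      ≤ (∫ ω, |M⁻¹ * S ω| ^ 4 ∂P) / ε ^ 4 := measureReal_abs_ge_le_integral_pow_div hε 4 hint
    _ = (∫ ω, S ω ^ 4 ∂P) / M ^ 4 / ε ^ 4 := by simp_rw [hpow, integral_div]
    _ ≤ (6 * (M * b) ^ 2 + M * b ^ 3) / M ^ 4 / ε ^ 4 := by
      gcongr
      simpa only [Finset.card_univ] using
        integral_pow_four_sum_sub_integral_le (s := Finset.univ) hmeas hind hnonneg hle hmean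
    _ = (6 * (b / M) ^ 2 + (b / M) ^ 3) / ε ^ 4 := by field_simp

end IndependentSums

section Truncation

variable {E : Type*} [NormedAddCommGroup E] {a : ℝ} {z : E}

def truncSq (a : ℝ) (z : E) : ℝ := if ‖z‖ < a then ‖z‖ ^ 2 else 0

def tailSq (a : ℝ) (z : E) : ℝ := if a ≤ ‖z‖ then ‖z‖ ^ 2 else 0

lemma truncSq_nonneg : 0 ≤ truncSq a z := by
  unfold truncSq; split_ifs <;> positivity

lemma truncSq_le_sq : truncSq a z ≤ a ^ 2 := by
  unfold truncSq; split_ifs with h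
  · exact pow_le_pow_left₀ (norm_nonneg z) h.le 2
  · positivity

lemma truncSq_le_norm_sq : truncSq a z ≤ ‖z‖ ^ 2 := by
  unfold truncSq; split_ifs <;> [exact le_rfl; positivity]

lemma truncSq_add_tailSq : truncSq a z + tailSq a z = ‖z‖ ^ 2 := by
  unfold truncSq tailSq; split_ifs <;> linarith

variable [MeasurableSpace E] [OpensMeasurableSpace E]

lemma measurable_truncSq : Measurable (truncSq a : E → ℝ) :=
  .ite (measurableSet_lt measurable_norm measurable_const) (measurable_norm.pow_const 2)
    measurable_const

lemma measurable_tailSq : Measurable (tailSq a : E → ℝ) :=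
  .ite (measurableSet_le measurable_const measurable_norm) (measurable_norm.pow_const 2)
    measurable_const

variable {Ω : Type*} [MeasurableSpace Ω] {P : Measure Ω}

lemma integral_truncSq_add_integral_tailSq {X : Ω → E} (hX : Measurable X)
    (hX2 : Integrable (fun ω => ‖X ω‖ ^ 2) P) :
    ∫ ω, truncSq a (X ω) ∂P + ∫ ω, tailSq a (X ω) ∂P = ∫ ω, ‖X ω‖ ^ 2 ∂P := by
  have hle (f : E → ℝ) (hf : Measurable f) (h : ∀ z, 0 ≤ f z ∧ f z ≤ ‖z‖ ^ 2) :
      Integrable (fun ω => f (X ω)) P :=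
    hX2.mono (hf.comp hX).aestronglyMeasurable <| ae_of_all _ fun ω => by
      simp only [Real.norm_eq_abs, abs_of_nonneg (h _).1, abs_of_nonneg (sq_nonneg ‖X ω‖)]
      exact (h _).2
  rw [← integral_add (hle _ measurable_truncSq fun z => ⟨truncSq_nonneg, truncSq_le_norm_sq⟩)
    (hle _ measurable_tailSq fun z => ⟨?_, ?_⟩)]
  · simp_rw [truncSq_add_tailSq]
  · unfold tailSq; split_ifs <;> positivity
  · rw [← truncSq_add_tailSq (a := a)]; linarith [truncSq_nonneg (a := a) (z := z)]

end Truncation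

lemma summable_inv_sq_of_tendsto_div {N : ℕ → ℕ} {c : ℝ}
    (hN : Tendsto (fun n : ℕ => (n : ℝ) / N n) atTop (𝓝 c)) :
    Summable fun n => ((N n : ℝ) ^ 2)⁻¹ := by
  refine .of_norm_bounded_eventually_nat
    ((Real.summable_one_div_nat_pow.2 one_lt_two).mul_left ((c + 1) ^ 2)) ?_
  filter_upwards [hN.eventually (eventually_le_nhds (lt_add_one c)), eventually_gt_atTop 0]
    with n hn hn0
  rw [norm_inv, norm_pow, Real.norm_natCast]
  rcases (N n).eq_zero_or_pos with h | h
  · rw [h, Nat.cast_zero, zero_pow two_ne_zero, inv_zero]; positivity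
  have hNpos : (0 : ℝ) < N n := Nat.cast_pos.2 h
  have hnN : (n : ℝ) ≤ (c + 1) * N n := (div_le_iff₀ hNpos).1 hn
  rw [mul_one_div, inv_eq_one_div, div_le_div_iff₀ (by positivity) (by positivity)]
  nlinarith [pow_le_pow_left₀ (by positivity) hnN 2]

section TriangularArray

variable {E : Type*} [NormedAddCommGroup E] [MeasurableSpace E] [OpensMeasurableSpace E]
  {Ω : Type*} [MeasurableSpace Ω] {P : Measure Ω}
  {N : ℕ → ℕ} {x : (n : ℕ) → Fin n → Fin (N n) → Ω → E} {η : ℕ → ℝ}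

lemma tendsto_average_integral_truncSq {c : ℝ} (hc : 0 < c)
    (hN : Tendsto (fun n : ℕ => (n : ℝ) / N n) atTop (𝓝 c))
    (hmeas : ∀ n i j, Measurable (x n i j)) (hvar : ∀ n i j, ∫ ω, ‖x n i j ω‖ ^ 2 ∂P = 1)
    (hηpos : ∀ n, 0 < η n) (hη0 : Tendsto η atTop (𝓝 0))
    (hLind : Tendsto (fun n : ℕ => (1 / ((n : ℝ) * N n * η n ^ 2)) *
      ∑ i, ∑ j, ∫ ω, tailSq (η n * √n) (x n i j ω) ∂P) atTop (𝓝 0)) :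
    Tendsto (fun n : ℕ => (1 / ((n : ℝ) * N n)) *
      ∑ i, ∑ j, ∫ ω, truncSq (η n * √n) (x n i j ω) ∂P) atTop (𝓝 1) := by
  have hlim := (tendsto_const_nhds (x := (1 : ℝ))).sub ((hη0.pow 2).mul hLind)
  rw [zero_pow two_ne_zero, zero_mul, sub_zero] at hlim
  refine hlim.congr' ?_
  filter_upwards [hN.eventually (eventually_gt_nhds hc), eventually_gt_atTop 0] with n hpos hn
  have hN0 : (N n : ℝ) ≠ 0 := fun h => by simp [h] at hpos
  have hsum : ∑ i, ∑ j, ∫ ω, truncSq (η n * √n) (x n i j ω) ∂P =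
      n * N n - ∑ i, ∑ j, ∫ ω, tailSq (η n * √n) (x n i j ω) ∂P := by
    have h (i : Fin n) (j : Fin (N n)) : ∫ ω, truncSq (η n * √n) (x n i j ω) ∂P =
        1 - ∫ ω, tailSq (η n * √n) (x n i j ω) ∂P := by
      rw [← hvar n i j, ← integral_truncSq_add_integral_tailSq (hmeas n i j)
        (Integrable.of_integral_ne_zero (by simp [hvar n i j]))]
      ring
    simp [h, Finset.sum_sub_distrib]
  rw [hsum]
  field_simp [(hηpos n).ne']

lemma ae_tendsto_average_truncSq_sub_integral [IsProbabilityMeasure P] {c : ℝ}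
    (hN : Tendsto (fun n : ℕ => (n : ℝ) / N n) atTop (𝓝 c))
    (hmeas : ∀ n i j, Measurable (x n i j))
    (hindep : ∀ n, iIndepFun (fun (ij : Fin n × Fin (N n)) ω => x n ij.1 ij.2 ω) P)
    (hvar : ∀ n i j, ∫ ω, ‖x n i j ω‖ ^ 2 ∂P = 1) (hη0 : Tendsto η atTop (𝓝 0)) :
    ∀ᵐ ω ∂P, Tendsto (fun n : ℕ => (1 / ((n : ℝ) * N n)) * ∑ i, ∑ j,
      (truncSq (η n * √n) (x n i j ω) - ∫ ω', truncSq (η n * √n) (x n i j ω') ∂P))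
      atTop (𝓝 0) := by
  set M : ℕ → ℝ := fun n => Fintype.card (Fin n × Fin (N n))
  set Y : (n : ℕ) → Fin n × Fin (N n) → Ω → ℝ :=
    fun n ij ω => truncSq (η n * √n) (x n ij.1 ij.2 ω)
  have hY_mean (n : ℕ) (ij : Fin n × Fin (N n)) : ∫ ω, Y n ij ω ∂P ≤ 1 :=
    hvar n ij.1 ij.2 ▸ integral_mono_of_nonneg (ae_of_all _ fun _ => truncSq_nonneg)
      (Integrable.of_integral_ne_zero (by simp [hvar n ij.1 ij.2]))
      (ae_of_all _ fun _ => truncSq_le_norm_sq)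
  have hsumm (ε : ℝ) (hε : 0 < ε) : Summable fun n =>
      P.real {ω | ε ≤ |(M n)⁻¹ * ∑ ij, (Y n ij ω - ∫ ω', Y n ij ω' ∂P)|} := by
    refine .of_norm_bounded_eventually_nat
      ((summable_inv_sq_of_tendsto_div hN).mul_left (7 / ε ^ 4)) ?_
    filter_upwards [hη0.eventually (Metric.closedBall_mem_nhds 0 one_pos),
      eventually_gt_atTop 0] with n hη hn
    rw [Real.norm_of_nonneg measureReal_nonneg]
    refine (measureReal_abs_average_sub_integral_ge_le (fun ij => measurable_truncSq.comp
      (hmeas n _ _)) ((hindep n).comp (fun _ => truncSq (η n * √n)) fun _ => measurable_truncSq)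
      (fun _ _ => truncSq_nonneg) (fun _ _ => truncSq_le_sq) (hY_mean n) hε).trans ?_
    have hη1 : η n ^ 2 ≤ 1 := by
      rw [Real.dist_0_eq_abs] at hη
      nlinarith [abs_nonneg (η n), sq_abs (η n)]
    set v : ℝ := (N n : ℝ)⁻¹
    have hv : 0 ≤ v ∧ v ≤ 1 := ⟨by positivity, Nat.cast_inv_le_one _⟩
    have hu : (η n * √n) ^ 2 / M n = η n ^ 2 * v := by
      simp only [M, Fintype.card_prod, Fintype.card_fin, Nat.cast_mul, v]
      rw [mul_pow, Real.sq_sqrt n.cast_nonneg]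
      field_simp
    have h0 : 0 ≤ η n ^ 2 * v := by positivity
    have h1 : η n ^ 2 * v ≤ v := mul_le_of_le_one_left hv.1 hη1
    calc (6 * ((η n * √n) ^ 2 / M n) ^ 2 + ((η n * √n) ^ 2 / M n) ^ 3) / ε ^ 4
        ≤ 7 * v ^ 2 / ε ^ 4 := by
          rw [hu]
          gcongr
          nlinarith [pow_le_pow_left₀ h0 h1 2, pow_le_pow_left₀ h0 h1 3,
            pow_le_pow_of_le_one hv.1 hv.2 (show 2 ≤ 3 by norm_num)]
      _ = 7 / ε ^ 4 * ((N n : ℝ) ^ 2)⁻¹ := by rw [inv_pow]; ring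
  filter_upwards [ae_tendsto_zero_of_summable_measureReal hsumm] with ω hω
  refine hω.congr fun n => ?_
  simp only [M, Y, Fintype.card_prod, Fintype.card_fin, Nat.cast_mul, one_div,
    Fintype.sum_prod_type]

end TriangularArray

theorem stmt17_general
    (c : ℝ) (hc : 0 < c)
    (N : ℕ → ℕ)
    (hN : Tendsto (fun n : ℕ => (n : ℝ) / (N n : ℝ)) atTop (𝓝 c))
    (Ω : Type) [MeasurableSpace Ω] (P : Measure Ω) [IsProbabilityMeasure P]
    (x : (n : ℕ) → Fin n → Fin (N n) → Ω → ℂ)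
    (hmeas : ∀ n i j, Measurable (x n i j))
    (hindep : ∀ n, ProbabilityTheory.iIndepFun
      (fun (ij : Fin n × Fin (N n)) ω => x n ij.1 ij.2 ω) P)
    (hvar : ∀ n i j, ∫ ω, ‖x n i j ω‖ ^ 2 ∂P = 1)
    (η : ℕ → ℝ) (hηpos : ∀ n, 0 < η n)
    (hη0 : Tendsto η atTop (𝓝 0))
    (hLind : Tendsto (fun n : ℕ =>
      (1 / ((n : ℝ) * (N n : ℝ) * η n ^ 2)) * ∑ i : Fin n, ∑ j : Fin (N n),
        ∫ ω, (if η n * Real.sqrt n ≤ ‖x n i j ω‖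
          then ‖x n i j ω‖ ^ 2 else 0) ∂P) atTop (𝓝 0)) :
    ∀ᵐ ω ∂P, Tendsto (fun n : ℕ =>
      (1 / ((n : ℝ) * (N n : ℝ))) * ∑ i : Fin n, ∑ j : Fin (N n),
        (if ‖x n i j ω‖ < η n * Real.sqrt n
          then ‖x n i j ω‖ ^ 2 else 0)) atTop (𝓝 1) := by
  have hmeans := tendsto_average_integral_truncSq hc hN hmeas hvar hηpos hη0 hLind
  filter_upwards [ae_tendsto_average_truncSq_sub_integral hN hmeas hindep hvar hη0] with ω hω
  refine (add_zero (1 : ℝ) ▸ hmeans.add hω).congr fun n => ?_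
  simp only [← mul_add, ← Finset.sum_add_distrib, add_sub_cancel]
  rfl

theorem stmt17
    (c : ℝ) (hc : 0 < c)
    (N : ℕ → ℕ)
    (hN : Tendsto (fun n : ℕ => (n : ℝ) / (N n : ℝ)) atTop (𝓝 c))
    (Ω : Type) [MeasurableSpace Ω] (P : Measure Ω) [IsProbabilityMeasure P]
    (x : (n : ℕ) → Fin n → Fin (N n) → Ω → ℂ)
    (hmeas : ∀ n i j, Measurable (x n i j))
    (hindep : ∀ n, ProbabilityTheory.iIndepFun
      (fun (ij : Fin n × Fin (N n)) ω => x n ij.1 ij.2 ω) P)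
    (hmean : ∀ n i j, ∫ ω, x n i j ω ∂P = 0)
    (hvar : ∀ n i j, ∫ ω, ‖x n i j ω‖ ^ 2 ∂P = 1)
    (η : ℕ → ℝ) (hηpos : ∀ n, 0 < η n)
    (hη0 : Tendsto η atTop (𝓝 0))
    (hηsqrt : Tendsto (fun n : ℕ => η n * Real.sqrt n) atTop atTop)
    (hLind : Tendsto (fun n : ℕ =>
      (1 / ((n : ℝ) * (N n : ℝ) * η n ^ 2)) * ∑ i : Fin n, ∑ j : Fin (N n),
        ∫ ω, (if η n * Real.sqrt n ≤ ‖x n i j ω‖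
          then ‖x n i j ω‖ ^ 2 else 0) ∂P) atTop (𝓝 0)) :
    ∀ᵐ ω ∂P, Tendsto (fun n : ℕ =>
      (1 / ((n : ℝ) * (N n : ℝ))) * ∑ i : Fin n, ∑ j : Fin (N n),
        (if ‖x n i j ω‖ < η n * Real.sqrt n
          then ‖x n i j ω‖ ^ 2 else 0)) atTop (𝓝 1) :=
  stmt17_general c hc N hN Ω P x hmeas hindep hvar η hηpos hη0 hLind

end
end
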